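/- arXiv:2205.04254 — 5 statements merged into one kernel-verified Lean document; each statement's English description precedes it below -/
import Mathlib

section
/- Let d_1, …, d_m be positive integers. Then there exists a nonzero real polynomial ψ in the coefficients of m-tuples of polynomials (g_1,…,g_m) with g_j ∈ ℝ[x]_{d_j}, such that for every tuple g = (g_1,…,g_m) with deg g_j ≤ d_j: if ψ does not vanish at the coefficients of g, then C(g) = ∅. -/
/-!
Normalise the multipliers of a critical point `x` of `g` so that `lam j₀ = 1`, and let `S` be
the other indices with `lam j ≠ 0`. In Taylor coordinates at `x` the critical-point equations
say exactly that the constant coefficients of the `g j`, `j ∈ S ∪ {j₀}`, vanish and that the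
linear coefficients of `g j₀` are `-∑_{j ∈ S} lam j ∂ᵢ g j (x)`. So the coefficient vectors of
such tuples form the image of a polynomial map whose parameters (`x`, the `lam j` for `j ∈ S`
and the remaining Taylor coefficients) are one fewer than the coefficients. More polynomials
than variables are algebraically dependent, hence a nonzero `ψ_{j₀,S}` vanishes on that image,
and `ψ` is the product of the `ψ_{j₀,S}`.
-/

open MvPolynomial

noncomputable section

/-- The set of critical points `C(g)`. -/
def Cset {n m : ℕ} (g : Fin m → MvPolynomial (Fin n) ℝ) : Set (Fin n → ℝ) :=
  {x | ∃ lam : Fin m → ℝ, lam ≠ 0 ∧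
    (∀ i, ∑ j, lam j * eval x (pderiv i (g j)) = 0) ∧
    (∀ j, lam j * eval x (g j) = 0)}

namespace MvPolynomial

theorem exists_ne_zero_aeval_eq_zero_of_card_lt {R σ τ : Type*} [CommRing R] [IsDomain R]
    [Finite σ] (h : Nat.card σ < Nat.card τ) (F : τ → MvPolynomial σ R) :
    ∃ ψ : MvPolynomial τ R, ψ ≠ 0 ∧ aeval F ψ = 0 := by
  have : Finite τ := Nat.finite_of_card_ne_zero h.ne_bot
  by_contra! hF
  have hind : AlgebraicIndependent R F := algebraicIndependent_iff.mpr fun ψ hψ => by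
    by_contra hψ0
    exact hF ψ hψ0 hψ
  have hle := hind.lift_cardinalMk_le_trdeg
  rw [MvPolynomial.trdeg_of_isDomain, ← Nat.cast_card, ← Nat.cast_card] at hle
  simp only [Cardinal.lift_natCast, Nat.cast_le] at hle
  omega

variable {R S σ : Type*} [CommRing R] [CommRing S]

theorem eval_aeval {τ : Type*} (y : σ → R) (F : τ → MvPolynomial σ R) (ψ : MvPolynomial τ R) :
    eval y (aeval F ψ) = eval (fun t => eval y (F t)) ψ :=
  comp_aeval_apply F (aeval y) ψ

def translate (x : σ → R) : MvPolynomial σ R →ₐ[R] MvPolynomial σ R :=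
  aeval fun i => X i + C (x i)

theorem translate_X (x : σ → R) (i : σ) : translate x (X i) = X i + C (x i) := aeval_X _ _

theorem translate_neg_translate (x : σ → R) (p : MvPolynomial σ R) :
    translate (-x) (translate x p) = p := by
  rw [← AlgHom.comp_apply]
  conv_rhs => rw [← AlgHom.id_apply (R := R) p]
  congr 1
  ext i
  simp [translate_X]

theorem map_translate (f : R →+* S) (x : σ → R) (p : MvPolynomial σ R) :
    map f (translate x p) = translate (f ∘ x) (map f p) := by
  induction p using MvPolynomial.induction_on with
  | C a => simp [translate]
  | add p q hp hq => simp only [map_add, hp, hq]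
  | mul_X p i hp =>
    simp only [map_mul, hp, translate_X, map_add, map_X, map_C, Function.comp_apply]

theorem coeff_zero_translate (x : σ → R) (p : MvPolynomial σ R) :
    coeff 0 (translate x p) = eval x p := by
  rw [← constantCoeff_eq]
  induction p using MvPolynomial.induction_on with
  | C a => simp [translate]
  | add p q hp hq => simp only [map_add, hp, hq]
  | mul_X p i hp => simp [hp, translate_X]

theorem pderiv_translate (x : σ → R) (i : σ) (p : MvPolynomial σ R) :
    pderiv i (translate x p) = translate x (pderiv i p) := by
  classical
  induction p using MvPolynomial.induction_on with
  | C a => simp [translate]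
  | add p q hp hq => simp only [map_add, hp, hq]
  | mul_X p k hp => rcases eq_or_ne k i with rfl | hki <;> simp [translate_X, *]

theorem coeff_single_one_translate (x : σ → R) (i : σ) (p : MvPolynomial σ R) :
    coeff (Finsupp.single i 1) (translate x p) = eval x (pderiv i p) := by
  have h := coeff_pderiv (translate x p) 0 (i := i)
  rw [zero_add, Finsupp.coe_zero, Pi.zero_apply, Nat.cast_zero, zero_add, mul_one] at h
  rw [← h, pderiv_translate, coeff_zero_translate]

theorem totalDegree_translate_le (x : σ → R) (p : MvPolynomial σ R) :
    (translate x p).totalDegree ≤ p.totalDegree := by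
  conv_lhs => rw [p.as_sum, map_sum]
  refine totalDegree_finsetSum_le fun s hs => ?_
  have hlin : ∀ i, (X i + C (x i) : MvPolynomial σ R).totalDegree ≤ 1 := fun i =>
    (totalDegree_add _ _).trans <| max_le
      ((totalDegree_monomial_le _ _).trans_eq (Finsupp.sum_single_index rfl))
      ((totalDegree_C _).trans_le zero_le_one)
  calc (translate x (monomial s (coeff s p))).totalDegree
      ≤ ∑ i ∈ s.support, s i := by
        rw [translate, aeval_monomial]
        refine (totalDegree_mul _ _).trans ?_
        rw [algebraMap_eq, totalDegree_C, zero_add]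
        refine (totalDegree_finsetProd _ _).trans (Finset.sum_le_sum fun i _ => ?_)
        exact (totalDegree_pow _ _).trans (by simpa using Nat.mul_le_mul_left (s i) (hlin i))
    _ ≤ p.totalDegree := le_totalDegree hs

instance [Finite σ] (D : ℕ) : Fintype {s : σ →₀ ℕ // (s.sum fun _ e => e) ≤ D} :=
  (Finsupp.finite_of_degree_le D).fintype

theorem sum_monomial_coeff_of_totalDegree_le [Finite σ] {D : ℕ} {p : MvPolynomial σ R}
    (hp : p.totalDegree ≤ D) :
    ∑ s : {s : σ →₀ ℕ // (s.sum fun _ e => e) ≤ D}, monomial s.1 (coeff s.1 p) = p := by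
  conv_rhs => rw [p.as_sum]
  have hmap := Finset.sum_map Finset.univ
    (Function.Embedding.subtype fun s : σ →₀ ℕ => (s.sum fun _ e => e) ≤ D)
    (fun s => monomial s (coeff s p))
  rw [Function.Embedding.coe_subtype] at hmap
  rw [← hmap]
  refine (Finset.sum_subset (fun s hs => ?_) (fun s _ hs => ?_)).symm
  · exact Finset.mem_map.mpr ⟨⟨s, (le_totalDegree hs).trans hp⟩, Finset.mem_univ _, rfl⟩
  · rw [notMem_support_iff.mp hs, monomial_zero]

end MvPolynomial

theorem eval_pderiv_eq_neg_sum_of_critical {R : Type*} [CommRing R] {n m : ℕ}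
    {g : Fin m → MvPolynomial (Fin n) R} {x : Fin n → R} {lam : Fin m → R} {j0 : Fin m}
    {S : Finset (Fin m)} (hj0 : j0 ∉ S) (hlam : lam j0 = 1)
    (hsupp : ∀ j ∉ insert j0 S, lam j = 0) {i : Fin n}
    (hgrad : ∑ j, lam j * eval x (pderiv i (g j)) = 0) :
    eval x (pderiv i (g j0)) = -∑ j ∈ S, lam j * eval x (pderiv i (g j)) := by
  rw [← Finset.sum_subset (Finset.subset_univ (insert j0 S))
      (fun j _ hj => by rw [hsupp j hj, zero_mul]),
    Finset.sum_insert hj0, hlam, one_mul] at hgrad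
  exact eq_neg_of_add_eq_zero_left hgrad

section CriticalTuples

variable {R : Type*} [CommRing R] {n m : ℕ} {d : Fin m → ℕ}

abbrev CoeffIdx (n : ℕ) (d : Fin m → ℕ) : Type :=
  Σ j : Fin m, {s : Fin n →₀ ℕ // (s.sum fun _ e => e) ≤ d j}

def constIdx (j : Fin m) : CoeffIdx n d :=
  ⟨j, 0, by rw [Finsupp.sum_zero_index]; exact Nat.zero_le _⟩

def linIdx (hd : ∀ j, 0 < d j) (j : Fin m) (i : Fin n) : CoeffIdx n d :=
  ⟨j, Finsupp.single i 1, by rw [Finsupp.sum_single_index rfl]; exact hd j⟩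

theorem constIdx_injective : Function.Injective (constIdx : Fin m → CoeffIdx n d) :=
  fun _ _ h => congrArg Sigma.fst h

variable (hd : ∀ j, 0 < d j)

theorem linIdx_injective (j : Fin m) : Function.Injective (linIdx (n := n) hd j) :=
  fun _ _ h => Finsupp.single_left_injective one_ne_zero
    (congrArg (fun p : CoeffIdx n d => (p.2 : Fin n →₀ ℕ)) h)

theorem linIdx_ne_constIdx (j j' : Fin m) (i : Fin n) : linIdx hd j i ≠ constIdx j' :=
  fun h => one_ne_zero <| Finsupp.single_eq_zero.mp
    (congrArg (fun p : CoeffIdx n d => (p.2 : Fin n →₀ ℕ)) h)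

variable (n) (j0 : Fin m) (S : Finset (Fin m))

/-- Indices of the Taylor coefficients that the critical-point equations determine. -/
def pinnedIdx : Fin n ⊕ Option S → CoeffIdx n d :=
  Sum.elim (linIdx hd j0) fun o => constIdx (o.elim' j0 (↑))

theorem pinnedIdx_injective (hj0 : j0 ∉ S) : Function.Injective (pinnedIdx n hd j0 S) :=
  (linIdx_injective hd j0).sumElim
    (constIdx_injective.comp (Option.injective_iff.2 ⟨Subtype.val_injective, by simpa using hj0⟩))
    fun i _ => linIdx_ne_constIdx hd _ _ i

theorem linIdx_notMem_range_pinnedIdx (hj0 : j0 ∉ S) {j : Fin m} (hj : j ∈ S) (i : Fin n) :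
    linIdx hd j i ∉ Set.range (pinnedIdx n hd j0 S) := by
  rintro ⟨i' | o, h⟩
  · have hj0j : j0 = j := congrArg Sigma.fst h
    exact hj0 (hj0j ▸ hj)
  · exact linIdx_ne_constIdx hd _ _ i h.symm

abbrev Params : Type := Fin n ⊕ S ⊕ ↥(Set.range (pinnedIdx n hd j0 S))ᶜ

theorem card_params_lt (hj0 : j0 ∉ S) :
    Nat.card (Params n hd j0 S) < Nat.card (CoeffIdx n d) := by
  have hrange := Set.ncard_add_ncard_compl (Set.range (pinnedIdx n hd j0 S))
  rw [← Nat.card_coe_set_eq, Nat.card_range_of_injective (pinnedIdx_injective n hd j0 S hj0),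
    Nat.card_sum, Finite.card_option, ← Nat.card_coe_set_eq] at hrange
  rw [Params, Nat.card_sum, Nat.card_sum]
  omega

def freeCoeff (p : CoeffIdx n d) : MvPolynomial (Params n hd j0 S) R :=
  if h : p ∈ (Set.range (pinnedIdx n hd j0 S))ᶜ then X (.inr (.inr ⟨p, h⟩)) else 0

def taylorCoeff : CoeffIdx n d → MvPolynomial (Params n hd j0 S) R :=
  Function.extend (pinnedIdx n hd j0 S)
    (Sum.elim (fun i => -∑ j : S, X (.inr (.inl j)) * freeCoeff n hd j0 S (linIdx hd j i)) 0)
    (freeCoeff n hd j0 S)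

def polyOfParams (j : Fin m) : MvPolynomial (Fin n) (MvPolynomial (Params n hd j0 S) R) :=
  translate (fun i => -X (.inl i))
    (∑ s : {s : Fin n →₀ ℕ // (s.sum fun _ e => e) ≤ d j},
      monomial s.1 (taylorCoeff (R := R) n hd j0 S ⟨j, s⟩))

def coeffOfParams (p : CoeffIdx n d) : MvPolynomial (Params n hd j0 S) R :=
  coeff p.2.1 (polyOfParams n hd j0 S p.1)

variable {n} (g : Fin m → MvPolynomial (Fin n) R) (x : Fin n → R) (lam : Fin m → R)

def paramsOf : Params n hd j0 S → R :=
  Sum.elim x (Sum.elim (fun j => lam j) fun p => coeff p.1.2.1 (translate x (g p.1.1)))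

theorem eval_freeCoeff {p : CoeffIdx n d} (hp : p ∉ Set.range (pinnedIdx n hd j0 S)) :
    eval (paramsOf hd j0 S g x lam) (freeCoeff n hd j0 S p)
      = coeff p.2.1 (translate x (g p.1)) := by
  rw [freeCoeff, dif_pos (show p ∈ _ᶜ from hp), eval_X]
  rfl

variable {hd j0 S g x lam}
variable (hj0 : j0 ∉ S) (hlam : lam j0 = 1) (hsupp : ∀ j ∉ insert j0 S, lam j = 0)
  (hgrad : ∀ i, ∑ j, lam j * eval x (pderiv i (g j)) = 0)
  (hzero : ∀ j ∈ insert j0 S, eval x (g j) = 0)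
include hj0 hlam hsupp hgrad hzero

theorem eval_taylorCoeff (p : CoeffIdx n d) :
    eval (paramsOf hd j0 S g x lam) (taylorCoeff n hd j0 S p)
      = coeff p.2.1 (translate x (g p.1)) := by
  by_cases hp : p ∈ Set.range (pinnedIdx n hd j0 S)
  · obtain ⟨i | _ | j, rfl⟩ := hp <;>
      rw [taylorCoeff, (pinnedIdx_injective n hd j0 S hj0).extend_apply]
    · change eval _ (-∑ j : S, _) = coeff (Finsupp.single i 1) (translate x (g j0))
      rw [map_neg, map_sum, coeff_single_one_translate,
        eval_pderiv_eq_neg_sum_of_critical hj0 hlam hsupp (hgrad i), ← Finset.sum_coe_sort S]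
      refine congrArg _ (Finset.sum_congr rfl fun j _ => ?_)
      rw [map_mul, eval_X, eval_freeCoeff hd j0 S g x lam
        (linIdx_notMem_range_pinnedIdx _ hd j0 S hj0 j.2 i)]
      exact congrArg _ (coeff_single_one_translate x i (g j))
    · rw [Sum.elim_inr, Pi.zero_apply, map_zero]
      exact ((coeff_zero_translate x _).trans (hzero j0 (Finset.mem_insert_self j0 S))).symm
    · rw [Sum.elim_inr, Pi.zero_apply, map_zero]
      exact ((coeff_zero_translate x _).trans (hzero j (Finset.mem_insert_of_mem j.2))).symm
  · rw [taylorCoeff, Function.extend_apply' _ _ _ hp]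
    exact eval_freeCoeff hd j0 S g x lam hp

theorem eval_coeffOfParams (hdeg : ∀ j, (g j).totalDegree ≤ d j) (p : CoeffIdx n d) :
    eval (paramsOf hd j0 S g x lam) (coeffOfParams n hd j0 S p) = coeff p.2.1 (g p.1) := by
  have hx : (eval (paramsOf hd j0 S g x lam) ∘ fun i => -X (.inl i)) = -x := by
    ext i
    simp [paramsOf]
  rw [coeffOfParams, ← coeff_map, polyOfParams, map_translate, hx, map_sum]
  simp only [map_monomial, eval_taylorCoeff hj0 hlam hsupp hgrad hzero]
  rw [sum_monomial_coeff_of_totalDegree_le ((totalDegree_translate_le x _).trans (hdeg p.1)),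
    translate_neg_translate]

end CriticalTuples

theorem exists_ne_zero_eval_coeff_eq_zero_of_critical {R : Type*} [CommRing R] [IsDomain R]
    {n m : ℕ} {d : Fin m → ℕ} (hd : ∀ j, 0 < d j) (j0 : Fin m) (T : Finset (Fin m)) :
    ∃ ψ : MvPolynomial (CoeffIdx n d) R, ψ ≠ 0 ∧
      ∀ (g : Fin m → MvPolynomial (Fin n) R) (x : Fin n → R) (lam : Fin m → R),
        (∀ j, (g j).totalDegree ≤ d j) → lam j0 = 1 → (∀ j ∉ T, lam j = 0) →
        (∀ i, ∑ j, lam j * eval x (pderiv i (g j)) = 0) → (∀ j ∈ T, eval x (g j) = 0) →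
        eval (fun p => coeff p.2.1 (g p.1)) ψ = 0 := by
  have hj0 : j0 ∉ T.erase j0 := Finset.notMem_erase j0 T
  obtain ⟨ψ, hψ0, hψ⟩ := exists_ne_zero_aeval_eq_zero_of_card_lt
    (card_params_lt n hd j0 _ hj0) (coeffOfParams (R := R) n hd j0 (T.erase j0))
  refine ⟨ψ, hψ0, fun g x lam hdeg hlam hsupp hgrad hzero => ?_⟩
  have hj0T : j0 ∈ T := by_contra fun h => one_ne_zero (hlam.symm.trans (hsupp j0 h))
  rw [← Finset.insert_erase hj0T] at hsupp hzero
  have hcoeff := funext (eval_coeffOfParams (hd := hd) hj0 hlam hsupp hgrad hzero hdeg)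
  rw [← hcoeff, ← eval_aeval, hψ, map_zero]

/-- **Genericity of the emptiness of `C(g)`.**  For given positive degrees `d 1, …, d m`
there is a nonzero polynomial `ψ` in the coefficients of tuples `(g 1, …, g m)` of
polynomials of degrees at most `d j` such that whenever `ψ` does not vanish at the
coefficients of such a tuple `g`, the set of critical points `C(g)` is empty.
The coefficient of the monomial `s` (with total degree at most `d j`) in `g j`
is recorded at the index `⟨j, s⟩`. -/
theorem generic_emptiness_of_critical_points (n m : ℕ) (d : Fin m → ℕ) (hd : ∀ j, 0 < d j) :
    ∃ ψ : MvPolynomial (Σ j : Fin m, {s : Fin n →₀ ℕ // (s.sum fun _ e => e) ≤ d j}) ℝ,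
      ψ ≠ 0 ∧
      ∀ g : Fin m → MvPolynomial (Fin n) ℝ, (∀ j, (g j).totalDegree ≤ d j) →
        eval (fun p => coeff p.2.1 (g p.1)) ψ ≠ 0 → Cset g = ∅ := by
  choose Ψ hΨ0 hΨ using fun q : Fin m × Finset (Fin m) =>
    exists_ne_zero_eval_coeff_eq_zero_of_critical (R := ℝ) (n := n) hd q.1 q.2
  refine ⟨∏ q, Ψ q, Finset.prod_ne_zero_iff.mpr fun q _ => hΨ0 q, fun g hdeg hne => ?_⟩
  refine Set.eq_empty_of_forall_notMem fun x ⟨lam, hlam, hgrad, hcompl⟩ => hne ?_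
  obtain ⟨j0, hj0⟩ : ∃ j0, lam j0 ≠ 0 := Function.ne_iff.mp hlam
  rw [map_prod]
  refine Finset.prod_eq_zero (Finset.mem_univ (j0, Finset.univ.filter (lam · ≠ 0)))
    (hΨ _ g x ((lam j0)⁻¹ • lam) hdeg ?_ ?_ ?_ ?_)
  · exact inv_mul_cancel₀ hj0
  · intro j hj
    rw [Finset.mem_filter, not_and, not_not] at hj
    rw [Pi.smul_apply, hj (Finset.mem_univ j), smul_zero]
  · intro i
    simp only [Pi.smul_apply, smul_eq_mul, mul_assoc, ← Finset.mul_sum, hgrad i, mul_zero]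
  · intro j hj
    exact (mul_eq_zero.mp (hcompl j)).resolve_left (Finset.mem_filter.mp hj).2
end
end

section
/- Let g_1, …, g_m ∈ ℝ[x] with g = (g_1,…,g_m). Assume that g_m = R − x_1² − … − x_n² for some R > 0 and that S(g) = ∅. Then −1 ∈ Q(g)[x]. -/
set_option linter.unusedSectionVars false
set_option linter.unusedVariables false


open MvPolynomial

noncomputable section

/-- `p` is a sum of squares of polynomials. -/
def IsSOS {σ : Type*} (p : MvPolynomial σ ℝ) : Prop :=
  ∃ (k : ℕ) (q : Fin k → MvPolynomial σ ℝ), p = ∑ i, q i ^ 2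

/-- Membership in the quadratic module `Q(g)` generated by the tuple `g`. -/
def InQM {σ ι : Type*} [Fintype ι] (g : ι → MvPolynomial σ ℝ) (p : MvPolynomial σ ℝ) : Prop :=
  ∃ (s0 : MvPolynomial σ ℝ) (s : ι → MvPolynomial σ ℝ),
    IsSOS s0 ∧ (∀ j, IsSOS (s j)) ∧ p = s0 + ∑ j, s j * g j

/-- The basic semi-algebraic set `S(g)`. -/
def Sg {n m : ℕ} (g : Fin m → MvPolynomial (Fin n) ℝ) : Set (Fin n → ℝ) :=
  {x | ∀ j, 0 ≤ eval x (g j)}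


-- SOS lemmas
lemma isSOS_zero {σ : Type*} : IsSOS (0 : MvPolynomial σ ℝ) :=
  ⟨0, ![], by simp⟩

lemma isSOS_one {σ : Type*} : IsSOS (1 : MvPolynomial σ ℝ) :=
  ⟨1, ![1], by simp⟩

lemma IsSOS.add {σ : Type*} {p q : MvPolynomial σ ℝ} (hp : IsSOS p) (hq : IsSOS q) :
    IsSOS (p + q) := by
  obtain ⟨k, f, rfl⟩ := hp
  obtain ⟨l, g, rfl⟩ := hq
  exact ⟨k + l, Fin.addCases f g, by rw [Fin.sum_univ_add]; simp⟩

lemma IsSOS.sq_mul {σ : Type*} (q : MvPolynomial σ ℝ) {p : MvPolynomial σ ℝ}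
    (hp : IsSOS p) : IsSOS (q ^ 2 * p) := by
  obtain ⟨k, f, rfl⟩ := hp
  exact ⟨k, fun i => q * f i, by rw [Finset.mul_sum]; simp [mul_pow]⟩

-- Quadratic modules
structure IsQM {n : ℕ} (M : Set (MvPolynomial (Fin n) ℝ)) : Prop where
  one_mem : 1 ∈ M
  add_mem : ∀ {a b : MvPolynomial (Fin n) ℝ}, a ∈ M → b ∈ M → a + b ∈ M
  sq_mul_mem : ∀ (q : MvPolynomial (Fin n) ℝ) {a}, a ∈ M → q ^ 2 * a ∈ M

namespace IsQM

variable {n : ℕ} {M : Set (MvPolynomial (Fin n) ℝ)} (hM : IsQM M)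
include hM

lemma zero_mem : (0 : MvPolynomial (Fin n) ℝ) ∈ M := by
  have := hM.sq_mul_mem 0 hM.one_mem
  simpa using this

lemma sum_mem {α : Type*} {s : Finset α} {f : α → MvPolynomial (Fin n) ℝ}
    (h : ∀ i ∈ s, f i ∈ M) : ∑ i ∈ s, f i ∈ M :=
  Finset.sum_induction f (· ∈ M) (fun _ _ ha hb => hM.add_mem ha hb) hM.zero_mem h

lemma sos_mul_mem {s p : MvPolynomial (Fin n) ℝ} (hs : IsSOS s) (hp : p ∈ M) :
    s * p ∈ M := by
  obtain ⟨k, f, rfl⟩ := hs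
  rw [Finset.sum_mul]
  exact hM.sum_mem fun i _ => hM.sq_mul_mem (f i) hp

lemma sos_mem {s : MvPolynomial (Fin n) ℝ} (hs : IsSOS s) : s ∈ M := by
  simpa using hM.sos_mul_mem hs hM.one_mem

lemma sq_mem (q : MvPolynomial (Fin n) ℝ) : q ^ 2 ∈ M := by
  simpa using hM.sq_mul_mem q hM.one_mem

lemma const_mem {t : ℝ} (ht : 0 ≤ t) : (C t : MvPolynomial (Fin n) ℝ) ∈ M := by
  have h : (C (Real.sqrt t) : MvPolynomial (Fin n) ℝ) ^ 2 * 1 = C t := by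
    rw [mul_one, ← map_pow, Real.sq_sqrt ht]
  exact h ▸ hM.sq_mul_mem _ hM.one_mem

lemma smul_mem {t : ℝ} (ht : 0 < t) {p : MvPolynomial (Fin n) ℝ} (hp : p ∈ M) :
    C t * p ∈ M := by
  have h : (C (Real.sqrt t) : MvPolynomial (Fin n) ℝ) ^ 2 * p = C t * p := by
    rw [← map_pow, Real.sq_sqrt ht.le]
  exact h ▸ hM.sq_mul_mem _ hp

lemma neg_one_of_neg_const {c : ℝ} (hc : c < 0)
    (hmem : (C c : MvPolynomial (Fin n) ℝ) ∈ M) : (-1 : MvPolynomial (Fin n) ℝ) ∈ M := by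
  have h := hM.smul_mem (t := (-c)⁻¹) (by simp [hc] : (0:ℝ) < (-c)⁻¹) hmem
  have e : (C (-c)⁻¹ : MvPolynomial (Fin n) ℝ) * C c = -1 := by
    rw [← map_mul]
    have : (-c)⁻¹ * c = -1 := by rw [← neg_inv, neg_mul, inv_mul_cancel₀ hc.ne]
    rw [this, map_neg, map_one]
  rwa [e] at h

end IsQM

section Main

variable {n : ℕ}

local notation "P" => MvPolynomial (Fin n) ℝ

/-- The family of proper quadratic modules containing `Q0`. -/
def QMfam (Q0 : Set (MvPolynomial (Fin n) ℝ)) : Set (Set (MvPolynomial (Fin n) ℝ)) :=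
  {M | IsQM M ∧ Q0 ⊆ M ∧ (-1 : MvPolynomial (Fin n) ℝ) ∉ M}

lemma exists_maximal_QM {Q0 : Set (MvPolynomial (Fin n) ℝ)} (hQ0 : IsQM Q0)
    (h1 : (-1 : MvPolynomial (Fin n) ℝ) ∉ Q0) :
    ∃ M ∈ QMfam Q0, Q0 ⊆ M ∧ ∀ M' ∈ QMfam Q0, M ⊆ M' → M' = M := by
  obtain ⟨M, hsub, hmax⟩ := zorn_subset_nonempty (QMfam Q0) (fun c hc hchain hne => by
    refine ⟨⋃₀ c, ⟨?_, ?_, ?_⟩, fun s hs => Set.subset_sUnion_of_mem hs⟩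
    · obtain ⟨t, ht⟩ := hne
      constructor
      · exact ⟨t, ht, (hc ht).1.one_mem⟩
      · rintro a b ⟨s, hs, ha⟩ ⟨s', hs', hb⟩
        rcases hchain.total hs hs' with h | h
        · exact ⟨s', hs', (hc hs').1.add_mem (h ha) hb⟩
        · exact ⟨s, hs, (hc hs).1.add_mem ha (h hb)⟩
      · rintro q a ⟨s, hs, ha⟩
        exact ⟨s, hs, (hc hs).1.sq_mul_mem q ha⟩
    · obtain ⟨t, ht⟩ := hne
      exact fun p hp => ⟨t, ht, (hc ht).2.1 hp⟩
    · rintro ⟨s, hs, hmem⟩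
      exact (hc hs).2.2 hmem) Q0 ⟨hQ0, le_refl _, h1⟩
  exact ⟨M, hmax.1, hsub, fun M' hM' hsub' => (hmax.2 hM' hsub').antisymm hsub'⟩


namespace IsQM
variable {n : ℕ} {M : Set (MvPolynomial (Fin n) ℝ)} (hM : IsQM M)
include hM

lemma half_mem {p : MvPolynomial (Fin n) ℝ} (hp : 2 * p ∈ M) : p ∈ M := by
  have h := hM.smul_mem (show (0:ℝ) < 2⁻¹ by norm_num) hp
  have e : (C (2⁻¹:ℝ) : MvPolynomial (Fin n) ℝ) * (2 * p) = p := by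
    rw [show ((2 : MvPolynomial (Fin n) ℝ)) = C (2:ℝ) from (map_ofNat _ 2).symm,
      ← mul_assoc, ← map_mul]
    norm_num
  rwa [e] at h

end IsQM

section Maximal

variable {n : ℕ} {Q0 M : Set (MvPolynomial (Fin n) ℝ)}
  (hQM : IsQM M) (hQ0M : Q0 ⊆ M) (hm1 : (-1 : MvPolynomial (Fin n) ℝ) ∉ M)
  (hmax : ∀ M' ∈ QMfam Q0, M ⊆ M' → M' = M)

include hQM hQ0M hm1 hmax in
lemma step_not_mem {a : MvPolynomial (Fin n) ℝ} (ha : a ∉ M) :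
    ∃ s ∈ M, ∃ t, IsSOS t ∧ (-1 : MvPolynomial (Fin n) ℝ) = s + t * a := by
  set M' : Set (MvPolynomial (Fin n) ℝ) :=
    {p | ∃ s ∈ M, ∃ t, IsSOS t ∧ p = s + t * a} with hM'
  have hQM' : IsQM M' := by
    constructor
    · exact ⟨1, hQM.one_mem, 0, isSOS_zero, by ring⟩
    · rintro p q ⟨s, hs, t, ht, rfl⟩ ⟨s', hs', t', ht', rfl⟩
      exact ⟨s + s', hQM.add_mem hs hs', t + t', ht.add ht', by ring⟩
    · rintro q p ⟨s, hs, t, ht, rfl⟩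
      exact ⟨q ^ 2 * s, hQM.sq_mul_mem q hs, q ^ 2 * t, ht.sq_mul q, by ring⟩
  have hMM' : M ⊆ M' := fun p hp => ⟨p, hp, 0, isSOS_zero, by ring⟩
  by_cases h1 : (-1 : MvPolynomial (Fin n) ℝ) ∈ M'
  · exact h1
  · exfalso
    have : M' = M := hmax M' ⟨hQM', fun p hp => hMM' (hQ0M hp), h1⟩ hMM'
    exact ha (this ▸ ⟨0, hQM.zero_mem, 1, isSOS_one, by ring⟩)

include hQM hQ0M hm1 hmax in
lemma total_mem (a : MvPolynomial (Fin n) ℝ) : a ∈ M ∨ -a ∈ M := by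
  by_contra h
  push_neg at h
  obtain ⟨ha, hna⟩ := h
  obtain ⟨s1, hs1, t1, ht1, e1⟩ := step_not_mem hQM hQ0M hm1 hmax ha
  obtain ⟨s2, hs2, t2, ht2, e2⟩ := step_not_mem hQM hQ0M hm1 hmax hna
  -- -(t1 + t2) = t2 * s1 + t1 * s2
  have key : -(t1 + t2) = t2 * s1 + t1 * s2 := by linear_combination t2 * e1 + t1 * e2
  have hneg_sum : -(t1 + t2) ∈ M := key ▸ hQM.add_mem (hQM.sos_mul_mem ht2 hs1)
    (hQM.sos_mul_mem ht1 hs2)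
  have ht1m : t1 ∈ M := hQM.sos_mem ht1
  have ht2m : t2 ∈ M := hQM.sos_mem ht2
  have hnegt1 : -t1 ∈ M := by
    have h := hQM.add_mem hneg_sum ht2m
    have e : -(t1 + t2) + t2 = -t1 := by ring
    rwa [e] at h
  have hta : t1 * a ∈ M := by
    apply hQM.half_mem
    have h := hQM.add_mem (hQM.add_mem (hQM.sq_mul_mem (1 + a) ht1m)
      (hQM.sq_mul_mem a hnegt1)) hnegt1
    have e : (1 + a) ^ 2 * t1 + a ^ 2 * -t1 + -t1 = 2 * (t1 * a) := by ring
    rwa [e] at h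
  exact hm1 (e1 ▸ hQM.add_mem hs1 hta)

end Maximal


section Approx

variable {n : ℕ} {M : Set (MvPolynomial (Fin n) ℝ)}

/-- `p` is approximately equal to the constant `c` modulo `M`. -/
def Approx (M : Set (MvPolynomial (Fin n) ℝ)) (p : MvPolynomial (Fin n) ℝ) (c : ℝ) : Prop :=
  ∀ ε : ℝ, 0 < ε → (C (c + ε) - p ∈ M ∧ p - C (c - ε) ∈ M)

lemma approx_congr {p p' : MvPolynomial (Fin n) ℝ} {c c' : ℝ}
    (h : Approx M p c) (hp : p = p') (hc : c = c') : Approx M p' c' := hp ▸ hc ▸ h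

variable (hQM : IsQM M)
include hQM

lemma approx_const (r : ℝ) : Approx M (C r) r := by
  intro ε hε
  constructor
  · have e : (C (r + ε) : MvPolynomial (Fin n) ℝ) - C r = C ε := by rw [map_add]; ring
    exact e ▸ hQM.const_mem hε.le
  · have e : (C r : MvPolynomial (Fin n) ℝ) - C (r - ε) = C ε := by rw [map_sub]; ring
    exact e ▸ hQM.const_mem hε.le

lemma approx_add {p q : MvPolynomial (Fin n) ℝ} {c d : ℝ}
    (hp : Approx M p c) (hq : Approx M q d) : Approx M (p + q) (c + d) := by
  intro ε hε
  have h2 : (0:ℝ) < ε / 2 := by linarith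
  obtain ⟨hp1, hp2⟩ := hp (ε / 2) h2
  obtain ⟨hq1, hq2⟩ := hq (ε / 2) h2
  constructor
  · have e : (C (c + d + ε) : MvPolynomial (Fin n) ℝ) - (p + q) =
        (C (c + ε / 2) - p) + (C (d + ε / 2) - q) := by
      rw [show c + d + ε = (c + ε / 2) + (d + ε / 2) by ring, map_add]; ring
    exact e ▸ hQM.add_mem hp1 hq1
  · have e : (p + q) - (C (c + d - ε) : MvPolynomial (Fin n) ℝ) =
        (p - C (c - ε / 2)) + (q - C (d - ε / 2)) := by
      rw [show c + d - ε = (c - ε / 2) + (d - ε / 2) by ring, map_add]; ring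
    exact e ▸ hQM.add_mem hp2 hq2

omit hQM in
lemma approx_neg {p : MvPolynomial (Fin n) ℝ} {c : ℝ}
    (hp : Approx M p c) : Approx M (-p) (-c) := by
  intro ε hε
  obtain ⟨hp1, hp2⟩ := hp ε hε
  constructor
  · have e : (C (-c + ε) : MvPolynomial (Fin n) ℝ) - (-p) = p - C (c - ε) := by
      rw [show -c + ε = -(c - ε) by ring, map_neg]; ring
    exact e ▸ hp2
  · have e : (-p) - (C (-c - ε) : MvPolynomial (Fin n) ℝ) = C (c + ε) - p := by
      rw [show -c - ε = -(c + ε) by ring, map_neg]; ring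
    exact e ▸ hp1

lemma approx_smul_pos {t : ℝ} (ht : 0 < t) {p : MvPolynomial (Fin n) ℝ} {c : ℝ}
    (hp : Approx M p c) : Approx M (C t * p) (t * c) := by
  intro ε hε
  have hεt : (0:ℝ) < ε / t := by positivity
  obtain ⟨hp1, hp2⟩ := hp (ε / t) hεt
  constructor
  · have h := hQM.smul_mem ht hp1
    have e : (C t : MvPolynomial (Fin n) ℝ) * (C (c + ε / t) - p) = C (t * c + ε) - C t * p := by
      rw [mul_sub, ← map_mul, show t * (c + ε / t) = t * c + ε by field_simp]
    exact e ▸ h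
  · have h := hQM.smul_mem ht hp2
    have e : (C t : MvPolynomial (Fin n) ℝ) * (p - C (c - ε / t)) = C t * p - C (t * c - ε) := by
      rw [mul_sub, ← map_mul, show t * (c - ε / t) = t * c - ε by field_simp]
    exact e ▸ h

lemma approx_smul (t : ℝ) {p : MvPolynomial (Fin n) ℝ} {c : ℝ}
    (hp : Approx M p c) : Approx M (C t * p) (t * c) := by
  rcases lt_trichotomy t 0 with h | h | h
  · have h' := approx_smul_pos hQM (show (0:ℝ) < -t by linarith) (approx_neg hp)
    exact approx_congr h' (by rw [map_neg]; ring) (by ring)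
  · subst h
    intro ε hε
    constructor
    · have e : (C (0 * c + ε) : MvPolynomial (Fin n) ℝ) - C 0 * p = C ε := by
        rw [zero_mul, zero_add, map_zero]; ring
      exact e ▸ hQM.const_mem hε.le
    · have e : (C 0 : MvPolynomial (Fin n) ℝ) * p - C (0 * c - ε) = C ε := by
        rw [zero_mul, zero_sub, map_zero, map_neg]; ring
      exact e ▸ hQM.const_mem hε.le
  · exact approx_smul_pos hQM h hp

lemma approx_sq_zero {p : MvPolynomial (Fin n) ℝ}
    (hp : Approx M p 0) : Approx M (p ^ 2) 0 := by
  intro ε hε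
  constructor
  · set δ := Real.sqrt ε with hδdef
    have hδ : 0 < δ := Real.sqrt_pos.mpr hε
    obtain ⟨h1, h2⟩ := hp δ hδ
    rw [zero_add] at h1
    have h2' : p + C δ ∈ M := by
      rwa [zero_sub, map_neg, sub_neg_eq_add] at h2
    have key : ((C δ : MvPolynomial (Fin n) ℝ) + p) ^ 2 * (C δ - p)
        + (C δ - p) ^ 2 * (p + C δ) = C (2 * δ) * (C (δ ^ 2) - p ^ 2) := by
      rw [show (C (2 * δ) : MvPolynomial (Fin n) ℝ) = 2 * C δ by rw [map_mul, map_ofNat],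
        show (C (δ ^ 2) : MvPolynomial (Fin n) ℝ) = (C δ) ^ 2 from map_pow _ _ _]
      ring
    have hmem : (C (2 * δ) : MvPolynomial (Fin n) ℝ) * (C (δ ^ 2) - p ^ 2) ∈ M :=
      key ▸ hQM.add_mem (hQM.sq_mul_mem _ h1) (hQM.sq_mul_mem _ h2')
    have h3 := hQM.smul_mem (show (0:ℝ) < (2 * δ)⁻¹ by positivity) hmem
    have e : (C ((2 * δ)⁻¹) : MvPolynomial (Fin n) ℝ) * (C (2 * δ) * (C (δ ^ 2) - p ^ 2))
        = C (δ ^ 2) - p ^ 2 := by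
      rw [← mul_assoc, ← map_mul, inv_mul_cancel₀ (by positivity : (2 * δ) ≠ 0), map_one,
        one_mul]
    rw [e] at h3
    rwa [zero_add, ← Real.sq_sqrt hε.le]
  · have e : p ^ 2 - (C (0 - ε) : MvPolynomial (Fin n) ℝ) = p ^ 2 + C ε := by
      rw [zero_sub, map_neg]; ring
    exact e ▸ hQM.add_mem (hQM.sq_mem p) (hQM.const_mem hε.le)

lemma approx_sq {p : MvPolynomial (Fin n) ℝ} {c : ℝ}
    (hp : Approx M p c) : Approx M (p ^ 2) (c ^ 2) := by
  have h0 : Approx M (p - C c) 0 :=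
    approx_congr (approx_add hQM hp (approx_const hQM (-c)))
      (by rw [map_neg]; ring) (by ring)
  have h1 := approx_sq_zero hQM h0
  have h2 := approx_add hQM (approx_add hQM h1 (approx_smul hQM (2 * c) hp))
    (approx_const hQM (-(c * c)))
  refine approx_congr h2 ?_ (by ring)
  rw [show (C (2 * c) : MvPolynomial (Fin n) ℝ) = 2 * C c by rw [map_mul, map_ofNat],
    map_neg, map_mul]
  ring

lemma approx_mul {p q : MvPolynomial (Fin n) ℝ} {c d : ℝ}
    (hp : Approx M p c) (hq : Approx M q d) : Approx M (p * q) (c * d) := by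
  have hs := approx_sq hQM (approx_add hQM hp hq)
  have h := approx_add hQM (approx_add hQM hs (approx_neg (approx_sq hQM hp)))
    (approx_neg (approx_sq hQM hq))
  have h2 := approx_smul hQM 2⁻¹ h
  refine approx_congr h2 ?_ (by ring)
  rw [show (p + q) ^ 2 + -(p ^ 2) + -(q ^ 2) = C (2:ℝ) * (p * q) by rw [map_ofNat]; ring,
    ← mul_assoc, ← map_mul]
  norm_num

end Approx


section Q0

variable {n : ℕ} {ι : Type*} [Fintype ι] [DecidableEq ι]

lemma isQM_InQM (g : ι → MvPolynomial (Fin n) ℝ) : IsQM {p | InQM g p} := by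
  constructor
  · exact ⟨1, fun _ => 0, isSOS_one, fun _ => isSOS_zero, by simp⟩
  · rintro p q ⟨s0, s, hs0, hs, rfl⟩ ⟨t0, t, ht0, ht, rfl⟩
    refine ⟨s0 + t0, fun j => s j + t j, hs0.add ht0, fun j => (hs j).add (ht j), ?_⟩
    simp only [add_mul, Finset.sum_add_distrib]
    ring
  · rintro q p ⟨s0, s, hs0, hs, rfl⟩
    refine ⟨q ^ 2 * s0, fun j => q ^ 2 * s j, hs0.sq_mul q, fun j => (hs j).sq_mul q, ?_⟩
    rw [mul_add, Finset.mul_sum]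
    simp_rw [← mul_assoc]

lemma g_mem_InQM (g : ι → MvPolynomial (Fin n) ℝ) (j : ι) : InQM g (g j) := by
  refine ⟨0, fun k => if k = j then 1 else 0, isSOS_zero, fun k => ?_, ?_⟩
  · by_cases h : k = j <;> simp [h, isSOS_one, isSOS_zero]
  · simp [ite_mul, Finset.sum_ite_eq']

end Q0

theorem neg_one_mem_QM_of_empty' {n m : ℕ} (g : Fin (m + 1) → MvPolynomial (Fin n) ℝ)
    (R : ℝ) (hR : 0 < R)
    (hlast : g (Fin.last m) = C R - ∑ i : Fin n, X i ^ 2)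
    (hempty : Sg g = ∅) :
    InQM g (-1) := by
  by_contra hcon
  have hQ0 : IsQM {p | InQM g p} := isQM_InQM g
  obtain ⟨M, ⟨hQM, hQ0M, hm1⟩, _, hmax⟩ := exists_maximal_QM hQ0 hcon
  have htot := total_mem hQM hQ0M hm1 hmax
  have hgM : ∀ j, g j ∈ M := fun j => hQ0M (g_mem_InQM g j)
  have hgm : g (Fin.last m) ∈ M := hgM _
  -- upper archimedean bound
  have hub : ∀ i : Fin n, (C (R + 4⁻¹) : MvPolynomial (Fin n) ℝ) - X i ∈ M := by
    intro i
    have hsum : (∑ j ∈ Finset.univ.erase i, (X j : MvPolynomial (Fin n) ℝ) ^ 2) ∈ M :=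
      hQM.sum_mem fun j _ => hQM.sq_mem (X j)
    have h := hQM.add_mem (hQM.add_mem hgm hsum) (hQM.sq_mem (X i - C 2⁻¹))
    have e : g (Fin.last m) + (∑ j ∈ Finset.univ.erase i, (X j : MvPolynomial (Fin n) ℝ) ^ 2)
        + (X i - C 2⁻¹) ^ 2 = C (R + 4⁻¹) - X i := by
      have hc : (2 : MvPolynomial (Fin n) ℝ) * C 2⁻¹ = 1 := by
        rw [show ((2 : MvPolynomial (Fin n) ℝ)) = C (2:ℝ) from (map_ofNat _ 2).symm, ← map_mul]
        norm_num
      rw [hlast, ← Finset.sum_erase_add _ _ (Finset.mem_univ i), map_add,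
        show (C (4⁻¹:ℝ) : MvPolynomial (Fin n) ℝ) = (C 2⁻¹) ^ 2 by rw [← map_pow]; norm_num]
      linear_combination (-(X i : MvPolynomial (Fin n) ℝ)) * hc
    rwa [e] at h
  -- lower archimedean bound
  have hlb : ∀ i : Fin n, (X i : MvPolynomial (Fin n) ℝ) + C (R + 4⁻¹) ∈ M := by
    intro i
    have hsum : (∑ j ∈ Finset.univ.erase i, (X j : MvPolynomial (Fin n) ℝ) ^ 2) ∈ M :=
      hQM.sum_mem fun j _ => hQM.sq_mem (X j)
    have h := hQM.add_mem (hQM.add_mem hgm hsum) (hQM.sq_mem (X i + C 2⁻¹))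
    have e : g (Fin.last m) + (∑ j ∈ Finset.univ.erase i, (X j : MvPolynomial (Fin n) ℝ) ^ 2)
        + (X i + C 2⁻¹) ^ 2 = X i + C (R + 4⁻¹) := by
      have hc : (2 : MvPolynomial (Fin n) ℝ) * C 2⁻¹ = 1 := by
        rw [show ((2 : MvPolynomial (Fin n) ℝ)) = C (2:ℝ) from (map_ofNat _ 2).symm, ← map_mul]
        norm_num
      rw [hlast, ← Finset.sum_erase_add _ _ (Finset.mem_univ i), map_add,
        show (C (4⁻¹:ℝ) : MvPolynomial (Fin n) ℝ) = (C 2⁻¹) ^ 2 by rw [← map_pow]; norm_num]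
      linear_combination (X i : MvPolynomial (Fin n) ℝ) * hc
    rwa [e] at h
  set L : Fin n → Set ℝ := fun i => {r : ℝ | (X i : MvPolynomial (Fin n) ℝ) - C r ∈ M}
    with hLdef
  have hLne : ∀ i, (-(R + 4⁻¹)) ∈ L i := by
    intro i
    show (X i : MvPolynomial (Fin n) ℝ) - C (-(R + 4⁻¹)) ∈ M
    rw [map_neg, sub_neg_eq_add]
    exact hlb i
  have hLbdd : ∀ i, ∀ r ∈ L i, r ≤ R + 4⁻¹ := by
    intro i r hr
    by_contra hgt
    push_neg at hgt
    have h := hQM.add_mem hr (hub i)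
    have e : ((X i : MvPolynomial (Fin n) ℝ) - C r) + (C (R + 4⁻¹) - X i)
        = C (R + 4⁻¹ - r) := by rw [map_sub]; ring
    exact hm1 (hQM.neg_one_of_neg_const (by linarith) (e ▸ h))
  set a : Fin n → ℝ := fun i => sSup (L i) with hadef
  have haX : ∀ i, Approx M (X i) (a i) := by
    intro i
    intro ε hε
    constructor
    · have hnot : (X i : MvPolynomial (Fin n) ℝ) - C (a i + ε) ∉ M := by
        intro hmem
        have hle : a i + ε ≤ a i :=
          le_csSup ⟨R + 4⁻¹, fun r hr => hLbdd i r hr⟩ hmem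
        linarith
      rcases htot ((X i : MvPolynomial (Fin n) ℝ) - C (a i + ε)) with h | h
      · exact absurd h hnot
      · rwa [neg_sub] at h
    · obtain ⟨r, hrL, hrgt⟩ := exists_lt_of_lt_csSup ⟨-(R + 4⁻¹), hLne i⟩
        (show a i - ε < a i by simp [hadef]; linarith)
      have h := hQM.add_mem hrL (hQM.const_mem (show (0:ℝ) ≤ r - (a i - ε) by linarith))
      have e : ((X i : MvPolynomial (Fin n) ℝ) - C r) + C (r - (a i - ε))
          = X i - C (a i - ε) := by rw [map_sub, map_sub]; ring
      rwa [e] at h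
  have happrox : ∀ p : MvPolynomial (Fin n) ℝ, Approx M p (eval a p) := by
    intro p
    induction p using MvPolynomial.induction_on with
    | C r => rw [eval_C]; exact approx_const hQM r
    | add p q hp hq => rw [map_add]; exact approx_add hQM hp hq
    | mul_X p i hp =>
        rw [map_mul, eval_X]
        exact approx_mul hQM hp (haX i)
  have hnonneg : ∀ p ∈ M, 0 ≤ eval a p := by
    intro p hp
    by_contra hneg
    push_neg at hneg
    obtain ⟨h1, -⟩ := happrox p (-(eval a p) / 2) (by linarith)
    have h := hQM.add_mem h1 hp
    have e : ((C (eval a p + -(eval a p) / 2) : MvPolynomial (Fin n) ℝ) - p) + p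
        = C (eval a p / 2) := by
      rw [show eval a p + -(eval a p) / 2 = eval a p / 2 by ring]; ring
    exact hm1 (hQM.neg_one_of_neg_const (by linarith) (e ▸ h))
  have hmem : a ∈ Sg g := fun j => hnonneg _ (hgM j)
  rw [hempty] at hmem
  exact hmem

end Main


/-- If the last polynomial of the tuple `g` is `R − x₁² − … − xₙ²` for some `R > 0`
and `S(g) = ∅`, then `−1 ∈ Q(g)`. -/
theorem neg_one_mem_QM_of_empty {n m : ℕ} (g : Fin (m + 1) → MvPolynomial (Fin n) ℝ)
    (R : ℝ) (hR : 0 < R)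
    (hlast : g (Fin.last m) = C R - ∑ i : Fin n, X i ^ 2)
    (hempty : Sg g = ∅) :
    InQM g (-1) := by
  exact neg_one_mem_QM_of_empty' g R hR hlast hempty
end
end

section
/- Let g_1, …, g_m ∈ ℝ[x] with g = (g_1,…,g_m). Assume that S(g) satisfies the Archimedean condition and that S(g) = ∅. Then −1 ∈ Q(g)[x]. -/
/-!
Extend `Q(g)` by Zorn's lemma to a maximal quadratic module `M` with `-1 ∉ M`. By the
Archimedean condition every polynomial is bounded with respect to `M` (the bounded elements form
a subalgebra containing the variables), and maximality together with boundedness forces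
`M ∪ -M = ℝ[x]`. Then `φ(a) = sup {r : a - r ∈ M}` is the unique real number with `a - φ(a)`
infinitesimal for `M`; as the infinitesimals are closed under sums and under products with bounded
elements, `φ` is an `ℝ`-algebra homomorphism, i.e. evaluation at a point `x`, and `φ ≥ 0` on
`M ⊇ Q(g)` puts `x` in `S(g)`.
-/

open MvPolynomial

noncomputable section

/-- `S(g)` satisfies the Archimedean condition. -/
def ArchCond {n m : ℕ} (g : Fin m → MvPolynomial (Fin n) ℝ) : Prop :=
  ∃ R : ℝ, 0 < R ∧ InQM g (C R - ∑ i : Fin n, X i ^ 2)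

section QuadraticModule

variable {A : Type*} [CommRing A]

structure IsQuadraticModule (M : Set A) : Prop where
  sq_mem (a : A) : a ^ 2 ∈ M
  add_mem {a b : A} : a ∈ M → b ∈ M → a + b ∈ M
  sq_mul_mem (a : A) {b : A} : b ∈ M → a ^ 2 * b ∈ M

def IsProperQuadraticModule (M : Set A) : Prop :=
  IsQuadraticModule M ∧ (-1 : A) ∉ M

namespace IsQuadraticModule

variable {M : Set A}

theorem zero_mem (hM : IsQuadraticModule M) : (0 : A) ∈ M := by
  simpa using hM.sq_mem 0

theorem one_mem (hM : IsQuadraticModule M) : (1 : A) ∈ M := by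
  simpa using hM.sq_mem 1

theorem mul_mem_of_isSumSq (hM : IsQuadraticModule M) {s a : A} (hs : IsSumSq s) (ha : a ∈ M) :
    s * a ∈ M := by
  induction hs with
  | zero => simpa using hM.zero_mem
  | sq_add b _ ih => simpa [add_mul, sq] using hM.add_mem (hM.sq_mul_mem b ha) ih

theorem mem_of_isSumSq (hM : IsQuadraticModule M) {s : A} (hs : IsSumSq s) : s ∈ M := by
  simpa using hM.mul_mem_of_isSumSq hs hM.one_mem

theorem add_mul_isSumSq (hM : IsQuadraticModule M) (b : A) :
    IsQuadraticModule {x | ∃ s ∈ M, ∃ t, IsSumSq t ∧ s + b * t = x} where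
  sq_mem a := ⟨a ^ 2, hM.sq_mem a, 0, .zero, by simp⟩
  add_mem := by
    rintro _ _ ⟨s, hs, t, ht, rfl⟩ ⟨s', hs', t', ht', rfl⟩
    exact ⟨s + s', hM.add_mem hs hs', t + t', ht.add ht', by ring⟩
  sq_mul_mem a := by
    rintro _ ⟨s, hs, t, ht, rfl⟩
    have ha : IsSumSq (a ^ 2) := by simp [sq]
    exact ⟨a ^ 2 * s, hM.sq_mul_mem a hs, a ^ 2 * t, ha.mul ht, by ring⟩

theorem exists_maximal_proper (hM : IsQuadraticModule M) (hM₁ : (-1 : A) ∉ M) :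
    ∃ N, M ⊆ N ∧ Maximal IsProperQuadraticModule N := by
  refine zorn_subset_nonempty {N | IsProperQuadraticModule N} (fun c hc hchain hne => ?_) M
    ⟨hM, hM₁⟩
  obtain ⟨N₀, hN₀⟩ := hne
  refine ⟨⋃₀ c, ⟨⟨fun a => ⟨N₀, hN₀, (hc hN₀).1.sq_mem a⟩, ?_, ?_⟩, ?_⟩,
    fun N hN => Set.subset_sUnion_of_mem hN⟩
  · rintro a b ⟨Na, hNa, ha⟩ ⟨Nb, hNb, hb⟩
    rcases hchain.total hNa hNb with h | h
    · exact ⟨Nb, hNb, (hc hNb).1.add_mem (h ha) hb⟩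
    · exact ⟨Na, hNa, (hc hNa).1.add_mem ha (h hb)⟩
  · rintro a b ⟨N, hN, hb⟩
    exact ⟨N, hN, (hc hN).1.sq_mul_mem a hb⟩
  · rintro ⟨N, hN, h⟩
    exact (hc hN).2 h

end IsQuadraticModule

theorem exists_add_mul_eq_neg_one_of_maximal {M : Set A}
    (hmax : Maximal IsProperQuadraticModule M) {b : A} (hb : b ∉ M) :
    ∃ s ∈ M, ∃ t, IsSumSq t ∧ s + b * t = -1 := by
  by_contra! h
  have hsub : M ⊆ {x | ∃ s ∈ M, ∃ t, IsSumSq t ∧ s + b * t = x} :=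
    fun a ha => ⟨a, ha, 0, .zero, by simp⟩
  exact hb <| hmax.2
    ⟨hmax.1.1.add_mul_isSumSq b, fun ⟨s, hs, t, ht, h'⟩ => h s hs t ht h'⟩ hsub
    ⟨0, hmax.1.1.zero_mem, 1, .one, by simp⟩

variable [Algebra ℝ A]

/-- `-c ≤ a ≤ c` in the order defined by `M`. -/
def IsBoundedBy (M : Set A) (a : A) (c : ℝ) : Prop :=
  algebraMap ℝ A c - a ∈ M ∧ algebraMap ℝ A c + a ∈ M

def IsBounded (M : Set A) (a : A) : Prop :=
  ∃ c, 0 < c ∧ IsBoundedBy M a c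

def IsInfinitesimal (M : Set A) (a : A) : Prop :=
  ∀ ε, 0 < ε → IsBoundedBy M a ε

namespace IsQuadraticModule

variable {M : Set A}

theorem smul_mem (hM : IsQuadraticModule M) {c : ℝ} (hc : 0 ≤ c) {a : A} (ha : a ∈ M) :
    c • a ∈ M := by
  rw [← Real.sq_sqrt hc, Algebra.smul_def, map_pow]
  exact hM.sq_mul_mem _ ha

theorem mem_of_smul_mem (hM : IsQuadraticModule M) {c : ℝ} (hc : 0 < c) {a : A}
    (ha : c • a ∈ M) : a ∈ M := by
  simpa [inv_smul_smul₀ hc.ne'] using hM.smul_mem (inv_nonneg.2 hc.le) ha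

theorem algebraMap_mem (hM : IsQuadraticModule M) {c : ℝ} (hc : 0 ≤ c) :
    algebraMap ℝ A c ∈ M := by
  simpa [Algebra.smul_def] using hM.smul_mem hc hM.one_mem

theorem nonneg_of_algebraMap_mem (hM : IsQuadraticModule M) (hM₁ : (-1 : A) ∉ M) {c : ℝ}
    (hc : algebraMap ℝ A c ∈ M) : 0 ≤ c := by
  by_contra! hneg
  refine hM₁ (hM.mem_of_smul_mem (neg_pos.2 hneg) ?_)
  simpa [Algebra.smul_def] using hc

theorem le_of_sub_mem (hM : IsQuadraticModule M) (hM₁ : (-1 : A) ∉ M) {a : A} {r c : ℝ}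
    (hr : a - algebraMap ℝ A r ∈ M) (hc : algebraMap ℝ A c - a ∈ M) : r ≤ c := by
  have := hM.nonneg_of_algebraMap_mem hM₁ (c := c - r) (by simpa using hM.add_mem hc hr)
  linarith

theorem sub_mem_of_le (hM : IsQuadraticModule M) {a : A} {c d : ℝ}
    (ha : a - algebraMap ℝ A c ∈ M) (hcd : d ≤ c) : a - algebraMap ℝ A d ∈ M := by
  simpa using hM.add_mem ha (hM.algebraMap_mem (sub_nonneg.2 hcd))

theorem neg_one_mem_of_sub_two_mem (hM : IsQuadraticModule M) {c : A} (h₁ : c - 2 ∈ M)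
    (h₂ : -c ^ 2 ∈ M) : (-1 : A) ∈ M := by
  refine hM.mem_of_smul_mem (by norm_num : (0 : ℝ) < 4) ?_
  have : (4 : ℝ) • (-1 : A) = (c - 2) ^ 2 + -c ^ 2 + (4 : ℝ) • (c - 2) := by
    simp only [Algebra.smul_def, map_ofNat]; ring
  rw [this]
  exact hM.add_mem (hM.add_mem (hM.sq_mem _) h₂) (hM.smul_mem (by norm_num) h₁)

theorem sq_sub_sq_mem (hM : IsQuadraticModule M) {a : A} {c : ℝ} (hc : 0 < c)
    (h : IsBoundedBy M a c) : algebraMap ℝ A (c ^ 2) - a ^ 2 ∈ M := by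
  refine hM.mem_of_smul_mem (by positivity : 0 < 2 * c) ?_
  have : (2 * c) • (algebraMap ℝ A (c ^ 2) - a ^ 2) =
      (algebraMap ℝ A c + a) ^ 2 * (algebraMap ℝ A c - a) +
        (algebraMap ℝ A c - a) ^ 2 * (algebraMap ℝ A c + a) := by
    rw [Algebra.smul_def]; simp only [map_mul, map_pow, map_ofNat]; ring
  rw [this]
  exact hM.add_mem (hM.sq_mul_mem _ h.1) (hM.sq_mul_mem _ h.2)

theorem sub_mem_of_sq_sub_sq_mem (hM : IsQuadraticModule M) {a : A} {c : ℝ} (hc : 0 < c)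
    (h : algebraMap ℝ A (c ^ 2) - a ^ 2 ∈ M) : algebraMap ℝ A c - a ∈ M := by
  refine hM.mem_of_smul_mem (by positivity : 0 < 2 * c) ?_
  have : (2 * c) • (algebraMap ℝ A c - a) =
      (algebraMap ℝ A (c ^ 2) - a ^ 2) + (algebraMap ℝ A c - a) ^ 2 := by
    rw [Algebra.smul_def]; simp only [map_mul, map_pow, map_ofNat]; ring
  exact this ▸ hM.add_mem h (hM.sq_mem _)

theorem isBoundedBy_of_sq_sub_sq_mem (hM : IsQuadraticModule M) {a : A} {c : ℝ} (hc : 0 < c)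
    (h : algebraMap ℝ A (c ^ 2) - a ^ 2 ∈ M) : IsBoundedBy M a c :=
  ⟨hM.sub_mem_of_sq_sub_sq_mem hc h,
    by simpa using hM.sub_mem_of_sq_sub_sq_mem hc (a := -a) (by simpa using h)⟩

end IsQuadraticModule

namespace IsBoundedBy

variable {M : Set A} {a b : A} {c d : ℝ}

theorem mono (hM : IsQuadraticModule M) (h : IsBoundedBy M a c) (hcd : c ≤ d) :
    IsBoundedBy M a d := by
  have hd : (0 : ℝ) ≤ d - c := sub_nonneg.2 hcd
  constructor
  · convert hM.add_mem h.1 (hM.algebraMap_mem hd) using 1; rw [map_sub]; ring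
  · convert hM.add_mem h.2 (hM.algebraMap_mem hd) using 1; rw [map_sub]; ring

theorem add (hM : IsQuadraticModule M) (ha : IsBoundedBy M a c) (hb : IsBoundedBy M b d) :
    IsBoundedBy M (a + b) (c + d) := by
  constructor
  · simpa [add_sub_add_comm] using hM.add_mem ha.1 hb.1
  · simpa [add_add_add_comm] using hM.add_mem ha.2 hb.2

theorem mul (hM : IsQuadraticModule M) (hc : 0 < c) (hd : 0 < d) (ha : IsBoundedBy M a c)
    (hb : IsBoundedBy M b d) : IsBoundedBy M (a * b) (c * d) := by
  refine hM.isBoundedBy_of_sq_sub_sq_mem (mul_pos hc hd) ?_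
  have : algebraMap ℝ A ((c * d) ^ 2) - (a * b) ^ 2
      = b ^ 2 * (algebraMap ℝ A (c ^ 2) - a ^ 2)
        + algebraMap ℝ A c ^ 2 * (algebraMap ℝ A (d ^ 2) - b ^ 2) := by
    simp only [map_mul, map_pow]; ring
  rw [this]
  exact hM.add_mem (hM.sq_mul_mem _ (hM.sq_sub_sq_mem hc ha))
    (hM.sq_mul_mem _ (hM.sq_sub_sq_mem hd hb))

end IsBoundedBy

namespace IsQuadraticModule

variable {M : Set A}

theorem isBoundedBy_algebraMap (hM : IsQuadraticModule M) (r : ℝ) :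
    IsBoundedBy M (algebraMap ℝ A r) |r| := by
  constructor
  · simpa using hM.algebraMap_mem (sub_nonneg.2 (le_abs_self r))
  · simpa [add_comm] using hM.algebraMap_mem (neg_le_iff_add_nonneg.1 (neg_abs_le r))

def boundedSubalgebra (hM : IsQuadraticModule M) : Subalgebra ℝ A where
  carrier := {a | IsBounded M a}
  add_mem' := fun ⟨c, hc, ha⟩ ⟨d, hd, hb⟩ => ⟨c + d, add_pos hc hd, ha.add hM hb⟩
  mul_mem' := fun ⟨c, hc, ha⟩ ⟨d, hd, hb⟩ => ⟨c * d, mul_pos hc hd, ha.mul hM hc hd hb⟩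
  algebraMap_mem' r := ⟨|r| + 1, by positivity,
    (isBoundedBy_algebraMap hM r).mono hM (le_add_of_nonneg_right zero_le_one)⟩

theorem isInfinitesimal_zero (hM : IsQuadraticModule M) : IsInfinitesimal M (0 : A) :=
  fun _ hε => by simpa [IsBoundedBy] using hM.algebraMap_mem hε.le

theorem isInfinitesimal_add (hM : IsQuadraticModule M) {a b : A} (ha : IsInfinitesimal M a)
    (hb : IsInfinitesimal M b) : IsInfinitesimal M (a + b) := fun ε hε => by
  simpa using (ha (ε / 2) (half_pos hε)).add hM (hb (ε / 2) (half_pos hε))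

theorem isInfinitesimal_mul (hM : IsQuadraticModule M) {a b : A} (ha : IsBounded M a)
    (hb : IsInfinitesimal M b) : IsInfinitesimal M (a * b) := fun ε hε => by
  obtain ⟨c, hc, hac⟩ := ha
  simpa [mul_div_cancel₀ ε hc.ne'] using
    hac.mul hM hc (div_pos hε hc) (hb (ε / c) (div_pos hε hc))

def character (M : Set A) (a : A) : ℝ :=
  sSup {r : ℝ | a - algebraMap ℝ A r ∈ M}

theorem le_character (hM : IsQuadraticModule M) (hM₁ : (-1 : A) ∉ M) {a : A}
    (ha : IsBounded M a) {r : ℝ} (hr : a - algebraMap ℝ A r ∈ M) : r ≤ character M a := by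
  obtain ⟨c, -, hac⟩ := ha
  exact le_csSup ⟨c, fun r' hr' => hM.le_of_sub_mem hM₁ hr' hac.1⟩ hr

theorem sub_mem_of_lt_character (hM : IsQuadraticModule M) {a : A} (ha : IsBounded M a)
    {r : ℝ} (hr : r < character M a) : a - algebraMap ℝ A r ∈ M := by
  obtain ⟨c, -, hac⟩ := ha
  have hne : {r : ℝ | a - algebraMap ℝ A r ∈ M}.Nonempty :=
    ⟨-c, by simpa [add_comm] using hac.2⟩
  obtain ⟨r', hr', hrr'⟩ := exists_lt_of_lt_csSup hne hr
  exact hM.sub_mem_of_le hr' hrr'.le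

theorem sub_mem_of_character_lt (hM : IsQuadraticModule M) (hM₁ : (-1 : A) ∉ M)
    (htot : ∀ b : A, b ∈ M ∨ -b ∈ M) {a : A} (ha : IsBounded M a) {r : ℝ}
    (hr : character M a < r) : algebraMap ℝ A r - a ∈ M :=
  (htot _).resolve_right fun h => hr.not_ge (hM.le_character hM₁ ha (by simpa using h))

theorem isInfinitesimal_sub_character (hM : IsQuadraticModule M) (hM₁ : (-1 : A) ∉ M)
    (htot : ∀ b : A, b ∈ M ∨ -b ∈ M) {a : A} (ha : IsBounded M a) :
    IsInfinitesimal M (a - algebraMap ℝ A (character M a)) := fun ε hε => by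
  constructor
  · convert hM.sub_mem_of_character_lt hM₁ htot ha (lt_add_of_pos_right (character M a) hε)
      using 1
    rw [map_add]; ring
  · convert hM.sub_mem_of_lt_character ha (sub_lt_self (character M a) hε) using 1
    rw [map_sub]; ring

theorem character_eq_of_isInfinitesimal (hM : IsQuadraticModule M) (hM₁ : (-1 : A) ∉ M)
    {a : A} {c : ℝ} (h : IsInfinitesimal M (a - algebraMap ℝ A c)) : character M a = c := by
  have hupper : ∀ ε > 0, algebraMap ℝ A (c + ε) - a ∈ M := fun ε hε => by
    convert (h ε hε).1 using 1; rw [map_add]; ring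
  have hlower : ∀ ε > 0, a - algebraMap ℝ A (c - ε) ∈ M := fun ε hε => by
    convert (h ε hε).2 using 1; rw [map_sub]; ring
  refine le_antisymm (le_of_forall_pos_le_add fun ε hε => ?_)
    (le_of_forall_pos_le_add fun ε hε => ?_)
  · exact csSup_le ⟨c - 1, hlower 1 one_pos⟩ fun r hr =>
      hM.le_of_sub_mem hM₁ hr (hupper ε hε)
  · have hbdd : BddAbove {r | a - algebraMap ℝ A r ∈ M} :=
      ⟨c + 1, fun r hr => hM.le_of_sub_mem hM₁ hr (hupper 1 one_pos)⟩
    linarith [show c - ε ≤ character M a from le_csSup hbdd (hlower ε hε)]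

theorem exists_algHom_nonneg_of_total (hM : IsQuadraticModule M) (hM₁ : (-1 : A) ∉ M)
    (hbdd : ∀ a, IsBounded M a) (htot : ∀ a : A, a ∈ M ∨ -a ∈ M) :
    ∃ φ : A →ₐ[ℝ] ℝ, ∀ a ∈ M, 0 ≤ φ a := by
  have hφ (a : A) := hM.isInfinitesimal_sub_character hM₁ htot (hbdd a)
  have hcomm (r : ℝ) : character M (algebraMap ℝ A r) = r :=
    hM.character_eq_of_isInfinitesimal hM₁ (by simpa using hM.isInfinitesimal_zero)
  refine ⟨{ toFun := character M
            map_one' := by simpa using hcomm 1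
            map_mul' a b := hM.character_eq_of_isInfinitesimal hM₁ ?_
            map_zero' := by simpa using hcomm 0
            map_add' a b := hM.character_eq_of_isInfinitesimal hM₁ ?_
            commutes' := hcomm }, fun a ha => hM.le_character hM₁ (hbdd a) (by simpa using ha)⟩
  · have hφa : IsBounded M (algebraMap ℝ A (character M a)) :=
      hM.boundedSubalgebra.algebraMap_mem (character M a)
    convert hM.isInfinitesimal_add (hM.isInfinitesimal_mul (hbdd b) (hφ a))
      (hM.isInfinitesimal_mul hφa (hφ b)) using 1
    rw [map_mul]; ring
  · convert hM.isInfinitesimal_add (hφ a) (hφ b) using 1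
    rw [map_add]; ring

-- With `d = τ - σ`: `a * d - 2 = s + t ∈ M`, and `-σ², -τ² ∈ M` give `-d² ∈ M`,
-- which the bound on `a` turns into `-(a * d)² ∈ M`.
theorem neg_one_mem_of_add_mul_eq_neg_one (hM : IsQuadraticModule M) {a s t σ τ : A}
    (ha : IsBounded M a) (hs : s ∈ M) (ht : t ∈ M) (hσ : IsSumSq σ) (hτ : IsSumSq τ)
    (hsσ : s + a * σ = -1) (htτ : t + -a * τ = -1) : (-1 : A) ∈ M := by
  have hστ (u : A) (hu : u ∈ M) : σ * τ * (1 + u) ∈ M :=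
    hM.mul_mem_of_isSumSq (hσ.mul hτ) (hM.add_mem hM.one_mem hu)
  have hσ₂ : -σ ^ 2 ∈ M := by
    have : -σ ^ 2 = σ ^ 2 * t + σ * τ * (1 + s) := by
      linear_combination (-(σ * τ)) * hsσ - σ ^ 2 * htτ
    exact this ▸ hM.add_mem (hM.sq_mul_mem σ ht) (hστ s hs)
  have hτ₂ : -τ ^ 2 ∈ M := by
    have : -τ ^ 2 = τ ^ 2 * s + σ * τ * (1 + t) := by
      linear_combination (-τ ^ 2) * hsσ - (σ * τ) * htτ
    exact this ▸ hM.add_mem (hM.sq_mul_mem τ hs) (hστ t ht)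
  have hd₂ : -(τ - σ) ^ 2 ∈ M := by
    have : -(τ - σ) ^ 2 = (σ + τ) ^ 2 + (-σ ^ 2 + -σ ^ 2) + (-τ ^ 2 + -τ ^ 2) := by ring
    exact this ▸
      hM.add_mem (hM.add_mem (hM.sq_mem _) (hM.add_mem hσ₂ hσ₂)) (hM.add_mem hτ₂ hτ₂)
  obtain ⟨c, hc, hac⟩ := ha
  refine hM.neg_one_mem_of_sub_two_mem (c := a * (τ - σ)) ?_ ?_
  · have : a * (τ - σ) - 2 = s + t := by linear_combination -hsσ - htτ
    exact this ▸ hM.add_mem hs ht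
  · have : -(a * (τ - σ)) ^ 2 = (τ - σ) ^ 2 * (algebraMap ℝ A (c ^ 2) - a ^ 2)
        + algebraMap ℝ A c ^ 2 * -(τ - σ) ^ 2 := by
      rw [map_pow]; ring
    exact this ▸ hM.add_mem (hM.sq_mul_mem _ (hM.sq_sub_sq_mem hc hac)) (hM.sq_mul_mem _ hd₂)

end IsQuadraticModule

theorem mem_or_neg_mem_of_maximal {M : Set A} (hmax : Maximal IsProperQuadraticModule M) {a : A}
    (ha : IsBounded M a) : a ∈ M ∨ -a ∈ M := by
  by_contra! h
  obtain ⟨s, hs, σ, hσ, hsσ⟩ := exists_add_mul_eq_neg_one_of_maximal hmax h.1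
  obtain ⟨t, ht, τ, hτ, htτ⟩ := exists_add_mul_eq_neg_one_of_maximal hmax h.2
  exact hmax.1.2 (hmax.1.1.neg_one_mem_of_add_mul_eq_neg_one ha hs ht hσ hτ hsσ htτ)

theorem IsQuadraticModule.exists_algHom_nonneg {M : Set A} (hM : IsQuadraticModule M)
    (hM₁ : (-1 : A) ∉ M) (hbdd : ∀ a, IsBounded M a) :
    ∃ φ : A →ₐ[ℝ] ℝ, ∀ a ∈ M, 0 ≤ φ a := by
  obtain ⟨N, hMN, hmax⟩ := hM.exists_maximal_proper hM₁
  have hbddN (a : A) : IsBounded N a :=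
    let ⟨c, hc, hac⟩ := hbdd a
    ⟨c, hc, hMN hac.1, hMN hac.2⟩
  obtain ⟨φ, hφ⟩ := hmax.1.1.exists_algHom_nonneg_of_total hmax.1.2 hbddN
    fun a => mem_or_neg_mem_of_maximal hmax (hbddN a)
  exact ⟨φ, fun a ha => hφ a (hMN ha)⟩

end QuadraticModule

theorem isSOS_iff_isSumSq {σ : Type*} {p : MvPolynomial σ ℝ} : IsSOS p ↔ IsSumSq p := by
  refine ⟨fun ⟨k, q, hp⟩ => hp ▸ IsSumSq.sum_sq _ _, fun h => ?_⟩
  induction h with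
  | zero => exact ⟨0, Fin.elim0, by simp⟩
  | sq_add a _ ih =>
    obtain ⟨k, q, rfl⟩ := ih
    exact ⟨k + 1, Fin.cons a q, by simp [Fin.sum_univ_succ, sq]⟩

theorem isQuadraticModule_inQM {σ ι : Type*} [Fintype ι] (g : ι → MvPolynomial σ ℝ) :
    IsQuadraticModule {p | InQM g p} where
  sq_mem a := ⟨a ^ 2, 0, isSOS_iff_isSumSq.2 (by simp [sq]), fun _ => isSOS_iff_isSumSq.2 .zero,
    by simp⟩
  add_mem := by
    rintro _ _ ⟨s₀, s, hs₀, hs, rfl⟩ ⟨t₀, t, ht₀, ht, rfl⟩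
    simp only [isSOS_iff_isSumSq] at hs₀ hs ht₀ ht
    refine ⟨s₀ + t₀, s + t, isSOS_iff_isSumSq.2 (hs₀.add ht₀),
      fun j => isSOS_iff_isSumSq.2 ((hs j).add (ht j)), ?_⟩
    simp only [Pi.add_apply, add_mul, Finset.sum_add_distrib]; ring
  sq_mul_mem a := by
    rintro _ ⟨s₀, s, hs₀, hs, rfl⟩
    simp only [isSOS_iff_isSumSq] at hs₀ hs
    have ha : IsSumSq (a ^ 2) := by simp [sq]
    refine ⟨a ^ 2 * s₀, fun j => a ^ 2 * s j, isSOS_iff_isSumSq.2 (ha.mul hs₀),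
      fun j => isSOS_iff_isSumSq.2 (ha.mul (hs j)), ?_⟩
    simp only [mul_add, Finset.mul_sum, mul_assoc]

theorem inQM_self {σ ι : Type*} [Fintype ι] (g : ι → MvPolynomial σ ℝ) (j : ι) :
    InQM g (g j) := by
  classical
  refine ⟨0, Pi.single j 1, isSOS_iff_isSumSq.2 .zero, fun i => isSOS_iff_isSumSq.2 ?_,
    by simp [Pi.single_apply, ite_mul]⟩
  rcases eq_or_ne i j with rfl | hij
  · simp [IsSumSq.one]
  · simp [hij, IsSumSq.zero]

theorem isBounded_of_sub_sum_sq_mem {n : ℕ} {M : Set (MvPolynomial (Fin n) ℝ)}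
    (hM : IsQuadraticModule M) {R : ℝ} (hR : C R - ∑ i, X i ^ 2 ∈ M)
    (p : MvPolynomial (Fin n) ℝ) : IsBounded M p := by
  suffices hX : ∀ i, X i ∈ hM.boundedSubalgebra by
    have : ⊤ ≤ hM.boundedSubalgebra :=
      adjoin_range_X (R := ℝ) ▸ Algebra.adjoin_le (Set.range_subset_iff.2 hX)
    exact this (Algebra.mem_top (x := p))
  intro i
  have hXi : C R - X i ^ 2 ∈ M := by
    rw [← Finset.add_sum_erase _ _ (Finset.mem_univ i)] at hR
    convert hM.add_mem hR (hM.mem_of_isSumSq (IsSumSq.sum_sq (Finset.univ.erase i) X)) using 1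
    ring
  refine ⟨|R| + 1, by positivity, hM.isBoundedBy_of_sq_sub_sq_mem (by positivity) ?_⟩
  have hR' : 0 ≤ (|R| + 1) ^ 2 - R := by nlinarith [le_abs_self R, abs_nonneg R]
  convert hM.add_mem hXi (hM.algebraMap_mem hR') using 1
  simp only [algebraMap_eq, map_sub]; ring

/-- If `S(g)` satisfies the Archimedean condition and `S(g) = ∅`, then `−1 ∈ Q(g)`. -/
theorem neg_one_mem_QM_of_archimedean_empty {n m : ℕ} (g : Fin m → MvPolynomial (Fin n) ℝ)
    (harch : ArchCond g) (hempty : Sg g = ∅) :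
    InQM g (-1) := by
  by_contra h₁
  obtain ⟨R, -, hR⟩ := harch
  have hM := isQuadraticModule_inQM g
  obtain ⟨φ, hφ⟩ := hM.exists_algHom_nonneg h₁ (isBounded_of_sub_sum_sq_mem hM hR)
  have hx : (fun i => φ (X i)) ∈ Sg g := fun j => by
    have := hφ (g j) (inQM_self g j)
    rwa [aeval_unique φ, aeval_eq_eval] at this
  rw [hempty] at hx
  exact hx
end
end

section
/- Let f ∈ ℝ[x] and let W ⊂ ℂⁿ be a complex variety defined by finitely many polynomials with real coefficients. Assume that f(W ∩ ℝⁿ) := {f(x) : x ∈ W ∩ ℝⁿ} is a finite set. Then there exist subsets W_1, …, W_r ⊂ ℂⁿ such that: (1) W_1, …, W_r are pairwise disjoint complex varieties, each defined by finitely many polynomials with real coefficients; (2) for each j, W_j ⊂ W and f is constant on W_j (f takes a single complex value on W_j); (3) (W_1 ∪ … ∪ W_r) ∩ ℝⁿ = W ∩ ℝⁿ. -/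
open MvPolynomial

noncomputable section

/-- Evaluation of a real polynomial at a complex point, via the canonical extension. -/
def evalC {n : ℕ} (f : MvPolynomial (Fin n) ℝ) (z : Fin n → ℂ) : ℂ :=
  eval z (map (algebraMap ℝ ℂ) f)

/-- `W ⊆ ℂⁿ` is a complex variety defined by finitely many polynomials with real
coefficients. -/
def IsRealVariety {n : ℕ} (W : Set (Fin n → ℂ)) : Prop :=
  ∃ (l : ℕ) (h : Fin l → MvPolynomial (Fin n) ℝ), W = {z | ∀ t, evalC (h t) z = 0}

/-- The real subspace `ℝⁿ ⊆ ℂⁿ`. -/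
def realPoints (n : ℕ) : Set (Fin n → ℂ) := {z | ∀ i, (z i).im = 0}

/-- On real points, the value of `evalC f` is real. -/
lemma evalC_im {n : ℕ} (f : MvPolynomial (Fin n) ℝ) {z : Fin n → ℂ}
    (hz : z ∈ realPoints n) : (evalC f z).im = 0 := by
  have hz' : z = fun i => ((z i).re : ℂ) := by
    funext i
    exact Complex.ext rfl (by simp [hz i])
  rw [evalC, hz', eval_map]
  have h := eval₂_comp_left (algebraMap ℝ ℂ) (RingHom.id ℝ) (fun i => (z i).re) f
  simp only [RingHom.comp_id, eval₂_id] at h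
  rw [show (fun i => ((z i).re : ℂ)) = (⇑(algebraMap ℝ ℂ) ∘ fun i => (z i).re) from rfl, ← h]
  simp

lemma evalC_sub_C {n : ℕ} (f : MvPolynomial (Fin n) ℝ) (a : ℝ) (z : Fin n → ℂ) :
    evalC (f - C a) z = evalC f z - (a : ℂ) := by
  simp [evalC]

/-- If `W` is a complex variety defined by real polynomials and `f(W ∩ ℝⁿ)` is finite, then
`W ∩ ℝⁿ` is covered by finitely many pairwise disjoint complex subvarieties of `W`, each
defined by real polynomials, on each of which `f` is constant. -/
theorem decompose_variety_finite_image {n : ℕ} (f : MvPolynomial (Fin n) ℝ)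
    (W : Set (Fin n → ℂ)) (hW : IsRealVariety W)
    (hfin : (evalC f '' (W ∩ realPoints n)).Finite) :
    ∃ (r : ℕ) (Ws : Fin r → Set (Fin n → ℂ)),
      (∀ j, IsRealVariety (Ws j)) ∧
      (∀ i j, i ≠ j → Disjoint (Ws i) (Ws j)) ∧
      (∀ j, Ws j ⊆ W ∧ ∃ c : ℂ, ∀ z ∈ Ws j, evalC f z = c) ∧
      (⋃ j, Ws j) ∩ realPoints n = W ∩ realPoints n := by
  obtain ⟨l, h, hWh⟩ := hW
  obtain ⟨r, c, hc⟩ := hfin.fin_embedding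
  -- each value `c j` is real
  have hcre : ∀ j : Fin r, ((c j).re : ℂ) = c j := by
    intro j
    have : c j ∈ evalC f '' (W ∩ realPoints n) := hc ▸ ⟨j, rfl⟩
    obtain ⟨x, hx, hfx⟩ := this
    have him : (c j).im = 0 := hfx ▸ evalC_im f hx.2
    exact Complex.ext rfl (by simp [him])
  set Ws : Fin r → Set (Fin n → ℂ) :=
    fun j => {z | (∀ t, evalC (h t) z = 0) ∧ evalC f z = c j} with hWs
  refine ⟨r, Ws, ?_, ?_, ?_, ?_⟩
  · intro j
    refine ⟨l + 1, Fin.cons (f - C (c j).re) h, ?_⟩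
    ext z
    simp only [hWs, Set.mem_setOf_eq, Fin.forall_fin_succ, Fin.cons_zero, Fin.cons_succ,
      evalC_sub_C, sub_eq_zero, hcre j]
    tauto
  · intro i j hij
    rw [Set.disjoint_left]
    rintro z ⟨-, hzi⟩ ⟨-, hzj⟩
    exact hij (c.injective (hzi ▸ hzj))
  · intro j
    refine ⟨fun z hz => ?_, c j, fun z hz => hz.2⟩
    rw [hWh]; exact hz.1
  · ext z
    simp only [Set.mem_inter_iff, Set.mem_iUnion]
    constructor
    · rintro ⟨⟨j, hj⟩, hre⟩
      refine ⟨?_, hre⟩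
      rw [hWh]
      exact hj.1
    · rintro ⟨hzW, hre⟩
      have : evalC f z ∈ Set.range c := hc.symm ▸ ⟨z, ⟨hzW, hre⟩, rfl⟩
      obtain ⟨j, hj⟩ := this
      refine ⟨⟨j, ?_, hj.symm⟩, hre⟩
      rw [hWh] at hzW
      exact hzW
end
end

section
/- Let f, g_1, …, g_m ∈ ℝ[x] with g = (g_1,…,g_m) and f* := inf{f(x) : x ∈ S(g)}. If f attains a global minimizer on S(g), then f* = min{ f(x) : x ∈ S(g) and (x, λ̄) ∈ V(h_FJ) for some λ̄ ∈ ℝ^{m+1} }, and this minimum is attained. -/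
open MvPolynomial

noncomputable section

/-- The real variety `V(h_FJ)` of the Fritz John system attached to `f` and `g`. -/
def VFJ {n m : ℕ} (f : MvPolynomial (Fin n) ℝ) (g : Fin m → MvPolynomial (Fin n) ℝ) :
    Set ((Fin n → ℝ) × (Fin (m + 1) → ℝ)) :=
  {p | (∀ i, p.2 0 * eval p.1 (pderiv i f) = ∑ j, p.2 j.succ * eval p.1 (pderiv i (g j)))
    ∧ (∀ j, p.2 j.succ * eval p.1 (g j) = 0)
    ∧ (∑ j, p.2 j ^ 2 = 1)}

open Filter Topology

/-- Restriction of a multivariate polynomial to the line `t ↦ u + t • d`. -/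
def linePoly {n : ℕ} (u d : Fin n → ℝ) (p : MvPolynomial (Fin n) ℝ) : Polynomial ℝ :=
  MvPolynomial.aeval (fun k => Polynomial.C (u k) + Polynomial.C (d k) * Polynomial.X) p

lemma linePoly_eval {n : ℕ} (u d : Fin n → ℝ) (p : MvPolynomial (Fin n) ℝ) (t : ℝ) :
    (linePoly u d p).eval t = eval (fun k => u k + d k * t) p := by
  induction p using MvPolynomial.induction_on with
  | C a => simp [linePoly]
  | add p q hp hq =>
      simp only [linePoly, map_add, Polynomial.eval_add] at *
      rw [hp, hq]
  | mul_X p k hp =>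
      simp only [linePoly, map_mul, Polynomial.eval_mul, aeval_X, eval_mul, eval_X,
        Polynomial.eval_add, Polynomial.eval_mul, Polynomial.eval_C, Polynomial.eval_X] at *
      rw [hp]

lemma linePoly_eval_zero {n : ℕ} (u d : Fin n → ℝ) (p : MvPolynomial (Fin n) ℝ) :
    (linePoly u d p).eval 0 = eval u p := by
  rw [linePoly_eval]; simp

lemma linePoly_deriv {n : ℕ} (u d : Fin n → ℝ) (p : MvPolynomial (Fin n) ℝ) :
    (linePoly u d p).derivative.eval 0 = ∑ k, d k * eval u (pderiv k p) := by
  induction p using MvPolynomial.induction_on with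
  | C a => simp [linePoly]
  | add p q hp hq =>
      simp only [linePoly, map_add, Polynomial.derivative_add, Polynomial.eval_add] at *
      rw [hp, hq, ← Finset.sum_add_distrib]
      exact Finset.sum_congr rfl fun k _ => by ring
  | mul_X p k hp =>
      classical
      have h1 : linePoly u d (p * X k)
          = linePoly u d p * (Polynomial.C (u k) + Polynomial.C (d k) * Polynomial.X) := by
        simp [linePoly]
      rw [h1, Polynomial.derivative_mul]
      simp only [Polynomial.derivative_add, Polynomial.derivative_C,
        Polynomial.derivative_mul, Polynomial.derivative_X, zero_add, mul_one,
        Polynomial.derivative_C_mul]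
      rw [Polynomial.eval_add, Polynomial.eval_mul, Polynomial.eval_mul]
      simp only [Polynomial.eval_add, Polynomial.eval_mul, Polynomial.eval_C,
        Polynomial.eval_X, mul_zero, add_zero, zero_add]
      rw [hp, linePoly_eval_zero]
      have h2 : ∀ k' : Fin n, eval u (pderiv k' (p * X k))
          = eval u (pderiv k' p) * u k + eval u p * (if k' = k then 1 else 0) := by
        intro k'
        rw [pderiv_mul]
        by_cases h : k' = k
        · subst h; simp
        · rw [pderiv_X_of_ne (fun hh : k = k' => h hh.symm)]
          simp [h]
      have h3 : ∑ k', d k' * eval u (pderiv k' (p * X k))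
          = ∑ k', ((d k' * eval u (pderiv k' p)) * u k
              + (if k' = k then d k' * eval u p else 0)) :=
        Finset.sum_congr rfl fun k' _ => by rw [h2]; by_cases h : k' = k <;> simp [h] <;> ring
      rw [h3, Finset.sum_add_distrib, ← Finset.sum_mul, Finset.sum_ite_eq' Finset.univ k]
      simp [mul_comm]

lemma eval_lt_right_of_deriv_neg (q : Polynomial ℝ) (h : q.derivative.eval 0 < 0) :
    ∀ᶠ t in 𝓝[>] (0:ℝ), q.eval t < q.eval 0 := by
  have hd : HasDerivAt (fun t => q.eval t) (q.derivative.eval 0) 0 := q.hasDerivAt 0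
  rw [hasDerivAt_iff_tendsto_slope] at hd
  have h1 : ∀ᶠ t in 𝓝[≠] (0:ℝ), slope (fun t => q.eval t) 0 t < 0 :=
    hd.eventually_lt_const h
  have h2 : 𝓝[>] (0:ℝ) ≤ 𝓝[≠] (0:ℝ) :=
    nhdsWithin_mono 0 (fun t ht => ne_of_gt ht)
  filter_upwards [h2 h1, self_mem_nhdsWithin] with t h3 h4
  have h4' : (0:ℝ) < t := h4
  rw [slope_def_field] at h3
  have h5 : (q.eval t - q.eval 0) / (t - 0) < 0 := h3
  rw [sub_zero] at h5
  rcases div_neg_iff.mp h5 with ⟨_, h6⟩ | ⟨h6, _⟩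
  · linarith
  · linarith

lemma eval_pos_right_of_deriv_pos (q : Polynomial ℝ) (h0 : q.eval 0 = 0)
    (h : 0 < q.derivative.eval 0) :
    ∀ᶠ t in 𝓝[>] (0:ℝ), 0 < q.eval t := by
  have hd : HasDerivAt (fun t => q.eval t) (q.derivative.eval 0) 0 := q.hasDerivAt 0
  rw [hasDerivAt_iff_tendsto_slope] at hd
  have h1 : ∀ᶠ t in 𝓝[≠] (0:ℝ), 0 < slope (fun t => q.eval t) 0 t :=
    hd.eventually_const_lt h
  have h2 : 𝓝[>] (0:ℝ) ≤ 𝓝[≠] (0:ℝ) :=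
    nhdsWithin_mono 0 (fun t ht => ne_of_gt ht)
  filter_upwards [h2 h1, self_mem_nhdsWithin] with t h3 h4
  have h4' : (0:ℝ) < t := h4
  rw [slope_def_field] at h3
  have h5 : 0 < (q.eval t - q.eval 0) / (t - 0) := h3
  rw [sub_zero, h0, sub_zero] at h5
  exact (div_pos_iff.mp h5).resolve_right (fun ⟨_, ht⟩ => absurd h4' (not_lt.mpr ht.le)) |>.1

lemma eval_pos_right_of_pos (q : Polynomial ℝ) (h0 : 0 < q.eval 0) :
    ∀ᶠ t in 𝓝[>] (0:ℝ), 0 < q.eval t := by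
  have hc : ContinuousAt (fun t => q.eval t) 0 := q.continuous.continuousAt
  have h1 : ∀ᶠ t in 𝓝 (0:ℝ), 0 < q.eval t := hc.eventually_const_lt h0
  exact eventually_nhdsWithin_of_eventually_nhds h1

lemma sum_subtype_of_support {m : ℕ} (P : Fin m → Prop) [DecidablePred P] (F : Fin m → ℝ)
    (G : {j // P j} → ℝ) (hF0 : ∀ j, ¬ P j → F j = 0) (hFG : ∀ a : {j // P j}, F a.1 = G a) :
    ∑ j, F j = ∑ a, G a := by
  rw [← Finset.sum_filter_of_ne (fun x _ hx => by by_contra hP; exact hx (hF0 x hP))]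
  rw [Finset.sum_subtype (p := P) (Finset.univ.filter P) (fun x => by simp) F]
  exact Finset.sum_congr rfl fun a _ => hFG a

/-- Fritz John conditions hold at a global minimizer. -/
lemma FJ_at_min {n m : ℕ} (f : MvPolynomial (Fin n) ℝ)
    (g : Fin m → MvPolynomial (Fin n) ℝ) (u : Fin n → ℝ)
    (hu : u ∈ Sg g) (hmin : ∀ x ∈ Sg g, eval u f ≤ eval x f) :
    ∃ lam : Fin (m + 1) → ℝ, (u, lam) ∈ VFJ f g := by
  classical
  set P : Fin m → Prop := fun j => eval u (g j) = 0 with hP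
  set v : Option {j : Fin m // P j} → Fin n → ℝ :=
    fun i => Option.elim i (fun k => eval u (pderiv k f))
      (fun a k => eval u (pderiv k (g a.1))) with hv
  set L : Option {j : Fin m // P j} → ((Fin n → ℝ) →ₗ[ℝ] ℝ) :=
    fun i => ∑ k, v i k • LinearMap.proj k with hL
  have hLapp : ∀ i d, L i d = ∑ k, v i k * d k := by
    intro i d
    simp [hL, LinearMap.sum_apply, LinearMap.smul_apply, LinearMap.proj_apply, smul_eq_mul]
  set Φ : (Fin n → ℝ) →ₗ[ℝ] (Option {j : Fin m // P j} → ℝ) := LinearMap.pi L with hΦ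
  have hΦapp : ∀ d i, Φ d i = ∑ k, v i k * d k := fun d i => hLapp i d
  -- Step 1: Φ is not surjective, else we could build a feasible descent direction.
  have hnotsurj : ¬ Function.Surjective Φ := by
    intro hsurj
    obtain ⟨d, hd⟩ := hsurj (fun i => Option.elim i (-1) (fun _ => 1))
    have hdf : (linePoly u d f).derivative.eval 0 = -1 := by
      rw [linePoly_deriv]
      have h1 := congrFun hd none
      rw [hΦapp] at h1
      have h1' : ∑ k : Fin n, v none k * d k = -1 := h1
      rw [← h1']
      exact Finset.sum_congr rfl fun k _ => mul_comm _ _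
    have hef : ∀ᶠ t in 𝓝[>] (0:ℝ), (linePoly u d f).eval t < eval u f := by
      have := eval_lt_right_of_deriv_neg (linePoly u d f) (by rw [hdf]; norm_num)
      rwa [linePoly_eval_zero] at this
    have heg : ∀ j : Fin m, ∀ᶠ t in 𝓝[>] (0:ℝ), 0 < (linePoly u d (g j)).eval t := by
      intro j
      by_cases hj : P j
      · apply eval_pos_right_of_deriv_pos
        · rw [linePoly_eval_zero]; exact hj
        · have h1 := congrFun hd (some ⟨j, hj⟩)
          rw [hΦapp] at h1
          have h1' : ∑ k : Fin n, v (some ⟨j, hj⟩) k * d k = 1 := h1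
          rw [linePoly_deriv]
          have h2 : ∑ k, d k * eval u (pderiv k (g j)) = ∑ k, v (some ⟨j, hj⟩) k * d k :=
            Finset.sum_congr rfl fun k _ => mul_comm _ _
          rw [h2, h1']; norm_num
      · apply eval_pos_right_of_pos
        rw [linePoly_eval_zero]
        exact lt_of_le_of_ne (hu j) (fun h => hj h.symm)
    have hall : ∀ᶠ t in 𝓝[>] (0:ℝ),
        (∀ j, 0 < (linePoly u d (g j)).eval t) ∧ (linePoly u d f).eval t < eval u f :=
      (eventually_all.mpr heg).and hef
    obtain ⟨t, hgt, hft⟩ := hall.exists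
    have hxS : (fun k => u k + d k * t) ∈ Sg g := by
      intro j
      have := hgt j
      rw [linePoly_eval] at this
      exact this.le
    have := hmin _ hxS
    rw [← linePoly_eval] at this
    exact absurd hft (not_lt.mpr this)
  -- Step 2: extract a nontrivial linear dependence among the gradients.
  have hlt : LinearMap.range Φ < ⊤ :=
    lt_top_iff_ne_top.mpr (fun h => hnotsurj (LinearMap.range_eq_top.mp h))
  obtain ⟨φ, hφ0, hker⟩ := Submodule.exists_le_ker_of_lt_top _ hlt
  set c : Option {j : Fin m // P j} → ℝ :=
    fun i => φ (fun i' => if i = i' then 1 else 0) with hc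
  have hrep : ∀ x : Option {j : Fin m // P j} → ℝ, φ x = ∑ i, x i * c i := by
    intro x
    conv_lhs => rw [pi_eq_sum_univ x]
    rw [map_sum]
    exact Finset.sum_congr rfl fun i _ => by rw [map_smul, smul_eq_mul]
  have hphiΦ : ∀ d, φ (Φ d) = 0 := fun d =>
    LinearMap.mem_ker.mp (hker (LinearMap.mem_range_self Φ d))
  have hczero : ∀ k, c none * v none k
      + ∑ a : {j : Fin m // P j}, c (some a) * v (some a) k = 0 := by
    intro k
    have h1 := hphiΦ (fun k' => if k = k' then 1 else 0)
    rw [hrep] at h1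
    have h2 : ∀ i, Φ (fun k' => if k = k' then 1 else 0) i = v i k := by
      intro i
      rw [hΦapp]
      simp [mul_ite, Finset.sum_ite_eq]
    rw [Finset.sum_congr rfl (fun i _ => by rw [h2 i])] at h1
    rw [Fintype.sum_option] at h1
    have h3 : ∑ a : {j : Fin m // P j}, v (some a) k * c (some a)
        = ∑ a : {j : Fin m // P j}, c (some a) * v (some a) k :=
      Finset.sum_congr rfl fun a _ => mul_comm _ _
    rw [h3] at h1
    linarith [h1]
  have hcne : ∃ i, c i ≠ 0 := by
    by_contra hall
    push_neg at hall
    exact hφ0 (LinearMap.ext fun x => by rw [hrep]; simp [hall])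
  -- Step 3: build the multipliers.
  set c' : Fin m → ℝ := fun j => if h : P j then c (some ⟨j, h⟩) else 0 with hc'
  set lam0 : Fin (m + 1) → ℝ := Fin.cases (c none) (fun j => -(c' j)) with hlam0
  have hlam00 : lam0 0 = c none := by simp [hlam0]
  have hlam0succ : ∀ j : Fin m, lam0 j.succ = -(c' j) := fun j => by simp [hlam0]
  set S : ℝ := ∑ j, lam0 j ^ 2 with hS
  have hSpos : 0 < S := by
    obtain ⟨i₀, hi₀⟩ := hcne
    have : ∃ jj : Fin (m + 1), lam0 jj ≠ 0 := by
      cases i₀ with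
      | none => exact ⟨0, by rwa [hlam00]⟩
      | some a =>
          refine ⟨a.1.succ, ?_⟩
          rw [hlam0succ, hc']
          simp only [dif_pos a.2, Subtype.coe_eta, neg_ne_zero]
          exact hi₀
    obtain ⟨jj, hjj⟩ := this
    have h1 : 0 < lam0 jj ^ 2 := by positivity
    have h2 : lam0 jj ^ 2 ≤ S := by
      rw [hS]
      exact Finset.single_le_sum (fun j _ => sq_nonneg (lam0 j)) (Finset.mem_univ jj)
    linarith
  set s : ℝ := Real.sqrt S with hsdef
  have hs : 0 < s := Real.sqrt_pos.mpr hSpos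
  refine ⟨fun j => lam0 j / s, ?_, ?_, ?_⟩
  · -- gradient condition
    intro i
    have key : ∑ j : Fin m, c' j * eval u (pderiv i (g j))
        = ∑ a : {j : Fin m // P j}, c (some a) * v (some a) i := by
      apply sum_subtype_of_support
      · intro j hj
        simp only [hc', dif_neg hj, zero_mul]
      · intro a
        have h1 : c' a.1 = c (some a) := by
          rw [hc']
          simp only [dif_pos a.2, Subtype.coe_eta]
        rw [h1]
        rfl
    have main := hczero i
    rw [← key] at main
    show lam0 0 / s * eval u (pderiv i f) = ∑ j, lam0 j.succ / s * eval u (pderiv i (g j))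
    have hterm : ∀ j : Fin m, lam0 j.succ / s * eval u (pderiv i (g j))
        = -(c' j * eval u (pderiv i (g j))) / s := by
      intro j
      rw [hlam0succ]
      ring
    rw [Finset.sum_congr rfl fun j _ => hterm j, ← Finset.sum_div, Finset.sum_neg_distrib]
    have h4 : -(∑ j : Fin m, c' j * eval u (pderiv i (g j))) = c none * v none i := by
      linarith [main]
    rw [h4, hlam00]
    show c none / s * eval u (pderiv i f) = c none * eval u (pderiv i f) / s
    ring
  · -- complementary slackness
    intro j
    show lam0 j.succ / s * eval u (g j) = 0
    by_cases hj : P j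
    · have h1 : eval u (g j) = 0 := hj
      rw [h1, mul_zero]
    · rw [hlam0succ, hc']
      simp [dif_neg hj]
  · -- normalization
    show ∑ j, (lam0 j / s) ^ 2 = 1
    simp only [div_pow]
    rw [← Finset.sum_div, ← hS, hsdef, Real.sq_sqrt hSpos.le, div_self hSpos.ne']

/-- If `f` attains a global minimizer `u` on `S(g)` (so `f* = f(u)`), then `f*` is the
minimum — attained — of `f` over the points of `S(g)` admitting Fritz John multipliers,
i.e. over `{x ∈ S(g) : ∃ λ̄, (x, λ̄) ∈ V(h_FJ)}`. -/
theorem fstar_eq_min_over_FJ_points {n m : ℕ} (f : MvPolynomial (Fin n) ℝ)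
    (g : Fin m → MvPolynomial (Fin n) ℝ) (u : Fin n → ℝ)
    (hu : u ∈ Sg g) (hmin : ∀ x ∈ Sg g, eval u f ≤ eval x f) :
    IsLeast {y : ℝ | ∃ x : Fin n → ℝ, x ∈ Sg g ∧
      (∃ lam : Fin (m + 1) → ℝ, (x, lam) ∈ VFJ f g) ∧ eval x f = y} (eval u f) := by
  constructor
  · exact ⟨u, hu, FJ_at_min f g u hu hmin, rfl⟩
  · rintro y ⟨x, hx, -, rfl⟩
    exact hmin x hx
end
end
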